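/- arXiv:2503.03253 — 5 statements merged into one kernel-verified Lean document; each statement's English description precedes it below -/
import Mathlib

section
/- Let T > 0 and let f, a : [0,T] → ℝ be continuous with f(0) ≥ a(0). Define ℓ(t) := sup_{s∈[0,t]} max(a(s) − f(s), 0) and g(t) := f(t) + ℓ(t). Then (g, ℓ) solves the dynamic Skorokhod problem DSP(f,a); that is: ℓ is continuous and nondecreasing with ℓ(0) = 0; g(t) ≥ a(t) for all t ∈ [0,T]; and the Lebesgue–Stieltjes measure associated with ℓ assigns zero mass to the set {t ∈ [0,T] : g(t) > a(t)}. -/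
/-!
`ℓ` is the running supremum of `(a - f)⁺`. Writing it as a supremum over the fixed compact set
`[0,T]` of a jointly continuous function gives continuity, and `g ≥ a` is immediate. If
`g t > a t`, i.e. `(a - f) t < ℓ t`, continuity of `a - f` and of `ℓ` yields a window around `t`
on which `a - f` stays below the value of `ℓ` at the window's left end; so `ℓ` is constant on
the window, which is therefore `dℓ`-null, and second countability makes the whole set null.
-/

open Set MeasureTheory Filter Topology

/-- For `t < 0` this is the junk value `sSup ∅ = 0`. -/
noncomputable def runningSup (h : ℝ → ℝ) (t : ℝ) : ℝ := sSup (h '' Icc 0 t)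

section RunningSup

variable {h : ℝ → ℝ} {T : ℝ}

lemma runningSup_of_neg {t : ℝ} (ht : t < 0) : runningSup h t = 0 := by
  rw [runningSup, Icc_eq_empty (by linarith), image_empty, Real.sSup_empty]

lemma runningSup_zero : runningSup h 0 = h 0 := by
  simp [runningSup]

lemma runningSup_max_zero (h0 : h 0 = 0) (t : ℝ) : runningSup h (max t 0) = runningSup h t := by
  rcases lt_or_ge t 0 with ht | ht
  · rw [max_eq_right ht.le, runningSup_zero, h0, runningSup_of_neg ht]
  · rw [max_eq_left ht]

lemma le_runningSup (hb : BddAbove (h '' Icc 0 T)) {s t : ℝ} (hs : s ∈ Icc 0 t) (ht : t ≤ T) :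
    h s ≤ runningSup h t :=
  le_csSup (hb.mono (image_mono (Icc_subset_Icc_right ht))) (mem_image_of_mem h hs)

lemma monotoneOn_runningSup (hb : BddAbove (h '' Icc 0 T)) :
    MonotoneOn (runningSup h) (Icc 0 T) := fun _ hs _ ht hst =>
  csSup_le_csSup (hb.mono (image_mono (Icc_subset_Icc_right ht.2)))
    ((nonempty_Icc.2 hs.1).image h) (image_mono (Icc_subset_Icc_right hst))

lemma runningSup_eq_of_forall_le (hb : BddAbove (h '' Icc 0 T)) {s t : ℝ} (hs : 0 ≤ s)
    (hst : s ≤ t) (ht : t ≤ T) (hle : ∀ u ∈ Icc s t, h u ≤ runningSup h s) :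
    runningSup h t = runningSup h s := by
  refine le_antisymm (csSup_le ((nonempty_Icc.2 (hs.trans hst)).image h) ?_)
    (monotoneOn_runningSup hb ⟨hs, hst.trans ht⟩ ⟨hs.trans hst, ht⟩ hst)
  rintro _ ⟨u, hu, rfl⟩
  rcases le_total u s with hus | hsu
  · exact le_runningSup hb ⟨hu.1, hus⟩ (hst.trans ht)
  · exact hle u ⟨hsu, hu.2⟩

/-- Writing `runningSup h t` as `sup_{s ∈ [0,T]} h (min s t)` (with `h` extended continuously
off `[0,T]`) makes it a supremum over a fixed compact set of a jointly continuous function. -/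
lemma continuousOn_runningSup (hh : ContinuousOn h (Icc 0 T)) :
    ContinuousOn (runningSup h) (Icc 0 T) := by
  rcases lt_or_ge T 0 with hT | hT
  · simp [Icc_eq_empty (not_le.2 hT)]
  set clamp : ℝ → ℝ := fun x => max (min x T) 0
  have hext : Continuous (h ∘ clamp) :=
    hh.comp_continuous (by fun_prop) fun x => ⟨le_max_right _ _, max_le (min_le_right _ _) hT⟩
  have hsup := isCompact_Icc.continuous_sSup (K := Icc (0 : ℝ) T)
    (f := fun t s => (h ∘ clamp) (min s t)) (hext.comp (by fun_prop))
  refine hsup.continuousOn.congr fun t ht => ?_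
  have hclamp : ∀ s ∈ Icc 0 t, clamp s = s := fun s hs =>
    by simp only [clamp, min_eq_left (hs.2.trans ht.2), max_eq_left hs.1]
  simp only [runningSup, Function.comp_apply]
  congr 1
  ext y
  constructor
  · rintro ⟨s, hs, rfl⟩
    exact ⟨s, ⟨hs.1, hs.2.trans ht.2⟩, by simp only [min_eq_left hs.2, hclamp s hs]⟩
  · rintro ⟨s, hs, rfl⟩
    have hst : min s t ∈ Icc 0 t := ⟨le_min hs.1 ht.1, min_le_right _ _⟩
    exact ⟨min s t, hst, by simp only [hclamp _ hst]⟩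

end RunningSup

lemma StieltjesFunction.measure_eq_zero_of_forall_exists_eq (L : StieltjesFunction ℝ)
    {S : Set ℝ} (hS : ∀ t ∈ S, ∃ u < t, ∃ v > t, L u = L v) : L.measure S = 0 :=
  measure_null_of_locally_null S fun t ht => by
    obtain ⟨u, hut, v, htv, hL⟩ := hS t ht
    exact ⟨Ioc u v, mem_nhdsWithin_of_mem_nhds (Ioc_mem_nhds hut htv),
      by rw [L.measure_Ioc, hL, sub_self, ENNReal.ofReal_zero]⟩

lemma exists_runningSup_max_eq_of_lt {T : ℝ} {k : ℝ → ℝ} (hk : ContinuousOn k (Icc 0 T))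
    {t : ℝ} (ht : t ∈ Icc 0 T) (hlt : k t < runningSup (fun s => max (k s) 0) t) :
    ∃ u < t, ∃ v > t, runningSup (fun s => max (k s) 0) (max u 0) =
      runningSup (fun s => max (k s) 0) (min v T) := by
  set M := runningSup (fun s => max (k s) 0)
  have hh : ContinuousOn (fun s => max (k s) 0) (Icc 0 T) := hk.sup continuousOn_const
  have hb := isCompact_Icc.bddAbove_image hh
  obtain ⟨c, hkc, hcM⟩ := exists_between hlt
  have hev : ∀ᶠ u in 𝓝[Icc 0 T] t, k u < c ∧ c < M u :=
    ((hk t ht).eventually_lt_const hkc).and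
      ((continuousOn_runningSup hh t ht).eventually_const_lt hcM)
  obtain ⟨ε, hε, hball⟩ := Metric.mem_nhdsWithin_iff.mp hev
  set s₁ := max (t - ε / 2) 0
  set s₂ := min (t + ε / 2) T
  have hs₁₂ : s₁ ≤ s₂ := (max_le (by linarith) ht.1).trans (le_min (by linarith) ht.2)
  have hwin : ∀ u ∈ Icc s₁ s₂, k u < c ∧ c < M u := by
    rintro u ⟨h₁, h₂⟩
    have h₁' := (le_max_left _ _).trans h₁
    have h₂' := h₂.trans (min_le_left _ _)
    refine hball ⟨?_, (le_max_right _ _).trans h₁, h₂.trans (min_le_right _ _)⟩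
    rw [Metric.mem_ball, Real.dist_eq, abs_lt]
    constructor <;> linarith
  have hM₁ : 0 ≤ M s₁ := (le_max_right _ _).trans
    (le_runningSup hb ⟨le_max_right _ _, le_rfl⟩ (hs₁₂.trans (min_le_right _ _)))
  refine ⟨t - ε / 2, by linarith, t + ε / 2, by linarith, (runningSup_eq_of_forall_le hb
    (le_max_right _ _) hs₁₂ (min_le_right _ _) fun u hu => ?_).symm⟩
  exact max_le (by linarith [(hwin u hu).1, (hwin s₁ ⟨le_rfl, hs₁₂⟩).2]) hM₁

theorem stmt0_general (T : ℝ) (f a : ℝ → ℝ)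
    (hf : ContinuousOn f (Set.Icc 0 T)) (ha : ContinuousOn a (Set.Icc 0 T))
    (h0 : a 0 ≤ f 0)
    (ℓ g : ℝ → ℝ)
    (hℓ : ∀ t, ℓ t = sSup ((fun s => max (a s - f s) 0) '' Set.Icc 0 t))
    (hg : ∀ t, g t = f t + ℓ t) :
    (ContinuousOn ℓ (Set.Icc 0 T) ∧ MonotoneOn ℓ (Set.Icc 0 T) ∧ ℓ 0 = 0) ∧
    (∀ t ∈ Set.Icc 0 T, a t ≤ g t) ∧
    (∀ L : StieltjesFunction ℝ, (∀ t, L t = ℓ (min t T)) →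
      L.measure {t ∈ Set.Icc 0 T | a t < g t} = 0) := by
  obtain rfl : ℓ = runningSup (fun s => max (a s - f s) 0) := funext hℓ
  have hk : ContinuousOn (fun s => a s - f s) (Icc 0 T) := ha.sub hf
  have hh : ContinuousOn (fun s => max (a s - f s) 0) (Icc 0 T) := hk.sup continuousOn_const
  have hb := isCompact_Icc.bddAbove_image hh
  have hh0 : max (a 0 - f 0) 0 = 0 := max_eq_right (by linarith)
  have hga : ∀ t ∈ Icc 0 T, a t ≤ g t := fun t ht => by
    rw [hg]
    linarith [le_max_left (a t - f t) 0, le_runningSup hb ⟨ht.1, le_rfl⟩ ht.2]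
  have hℓ0 : runningSup (fun s => max (a s - f s) 0) 0 = 0 := by rw [runningSup_zero, hh0]
  refine ⟨⟨continuousOn_runningSup hh, monotoneOn_runningSup hb, hℓ0⟩, hga,
    fun L hL => L.measure_eq_zero_of_forall_exists_eq fun t ⟨ht, hat⟩ => ?_⟩
  obtain ⟨u, hut, v, htv, hflat⟩ :=
    exists_runningSup_max_eq_of_lt hk ht (by rw [hg] at hat; linarith)
  refine ⟨u, hut, v, htv, ?_⟩
  rw [hL, hL, min_eq_left (hut.le.trans ht.2),
    ← runningSup_max_zero (h := fun s => max (a s - f s) 0) hh0, hflat]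

/-- Let `T > 0` and `f, a : [0,T] → ℝ` continuous with `f 0 ≥ a 0`.
With `ℓ t = sup_{s ∈ [0,t]} max (a s - f s) 0` and `g = f + ℓ`, the pair `(g, ℓ)` solves
the dynamic Skorokhod problem `DSP(f, a)`: `ℓ` is continuous and nondecreasing on `[0,T]`
with `ℓ 0 = 0`; `g ≥ a` on `[0,T]`; and the Lebesgue–Stieltjes measure of `ℓ` (encoded by
any Stieltjes function agreeing with the clamped extension of `ℓ`) gives zero mass to
`{t ∈ [0,T] | g t > a t}`. -/
theorem stmt0 (T : ℝ) (hT : 0 < T) (f a : ℝ → ℝ)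
    (hf : ContinuousOn f (Set.Icc 0 T)) (ha : ContinuousOn a (Set.Icc 0 T))
    (h0 : a 0 ≤ f 0)
    (ℓ g : ℝ → ℝ)
    (hℓ : ∀ t, ℓ t = sSup ((fun s => max (a s - f s) 0) '' Set.Icc 0 t))
    (hg : ∀ t, g t = f t + ℓ t) :
    (ContinuousOn ℓ (Set.Icc 0 T) ∧ MonotoneOn ℓ (Set.Icc 0 T) ∧ ℓ 0 = 0) ∧
    (∀ t ∈ Set.Icc 0 T, a t ≤ g t) ∧
    (∀ L : StieltjesFunction ℝ, (∀ t, L t = ℓ (min t T)) →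
      L.measure {t ∈ Set.Icc 0 T | a t < g t} = 0) :=
  stmt0_general T f a hf ha h0 ℓ g hℓ hg
end

section
/- Let T > 0 and let f, a : [0,T] → ℝ be continuous with f(0) ≥ a(0). If (g, ℓ) ∈ C([0,T];ℝ)² solves the dynamic Skorokhod problem DSP(f,a), then for every t ∈ [0,T] one has ℓ(t) = sup_{s∈[0,t]} max(a(s) − f(s), 0) and g(t) = f(t) + sup_{s∈[0,t]} max(a(s) − f(s), 0). In particular, the solution to DSP(f,a) is unique. -/
/-!
The regulator `ℓ` dominates `a - f` (because `g ≥ a`) and `0 = ℓ 0`, so by monotonicity `ℓ t`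
bounds `max (a - f) 0` on `[0, t]`. Conversely, if `ℓ t` exceeded an upper bound `c` of
`max (a - f) 0` on `[0, t]`, then after the last time `s₀ ≤ t` with `ℓ s₀ ≤ c` we would have
`g = f + ℓ > f + c ≥ a`; the Stieltjes measure of `ℓ` charges no such set, so `ℓ` cannot increase
on `(s₀, t]`, contradicting `ℓ s₀ ≤ c < ℓ t`. Hence `ℓ t` is the least upper bound.
-/

open Set MeasureTheory

theorem StieltjesFunction.le_of_measure_Ioc_eq_zero (L : StieltjesFunction ℝ) {s t : ℝ}
    (h : L.measure (Ioc s t) = 0) : L t ≤ L s := by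
  rw [L.measure_Ioc, ENNReal.ofReal_eq_zero] at h
  linarith

theorem ContinuousOn.exists_le_forall_Ioc_lt {ℓ : ℝ → ℝ} {u t c : ℝ}
    (hℓ : ContinuousOn ℓ (Icc u t)) (hut : u ≤ t) (hu : ℓ u ≤ c) (ht : c < ℓ t) :
    ∃ s₀ ∈ Ico u t, ℓ s₀ ≤ c ∧ ∀ s ∈ Ioc s₀ t, c < ℓ s := by
  set S := Icc u t ∩ ℓ ⁻¹' Iic c
  have hS : IsCompact S := isCompact_Icc.of_isClosed_subset
    (hℓ.preimage_isClosed_of_isClosed isClosed_Icc isClosed_Iic) inter_subset_left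
  have hsup : sSup S ∈ S := hS.sSup_mem ⟨u, left_mem_Icc.2 hut, hu⟩
  obtain ⟨⟨hu_le, hle_t⟩, hle_c⟩ := hsup
  refine ⟨sSup S, ⟨hu_le, lt_of_le_of_ne hle_t ?_⟩, hle_c, fun s hs => ?_⟩
  · rintro heq
    rw [heq] at hle_c
    exact (not_le.2 ht) hle_c
  · by_contra! hsc
    exact (not_le.2 hs.1) (le_csSup hS.bddAbove ⟨⟨hu_le.trans hs.1.le, hs.2⟩, hsc⟩)

theorem max_sub_le_regulator {T t : ℝ} {f a g ℓ : ℝ → ℝ}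
    (hgf : ∀ s ∈ Icc 0 T, g s = f s + ℓ s) (hℓ0 : ℓ 0 = 0) (hℓm : MonotoneOn ℓ (Icc 0 T))
    (hga : ∀ s ∈ Icc 0 T, a s ≤ g s) (ht : t ∈ Icc 0 T) :
    ∀ s ∈ Icc 0 t, max (a s - f s) 0 ≤ ℓ t := by
  intro s hs
  have hsT : s ∈ Icc 0 T := ⟨hs.1, hs.2.trans ht.2⟩
  have h0T : (0 : ℝ) ∈ Icc 0 T := ⟨le_rfl, ht.1.trans ht.2⟩
  have hafs : a s - f s ≤ ℓ s := by linarith [hga s hsT, hgf s hsT]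
  refine max_le (hafs.trans (hℓm hsT ht hs.2)) ?_
  simpa [hℓ0] using hℓm h0T ht ht.1

theorem regulator_le_of_forall_max_sub_le {T t c : ℝ} {f a g ℓ : ℝ → ℝ}
    {L : StieltjesFunction ℝ} (hℓc : ContinuousOn ℓ (Icc 0 T))
    (hgf : ∀ s ∈ Icc 0 T, g s = f s + ℓ s) (hℓ0 : ℓ 0 = 0) (hL : ∀ s ∈ Icc 0 T, L s = ℓ s)
    (hLzero : L.measure {s ∈ Icc 0 T | a s < g s} = 0) (ht : t ∈ Icc 0 T)
    (hc : ∀ s ∈ Icc 0 t, max (a s - f s) 0 ≤ c) : ℓ t ≤ c := by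
  have hsub : Icc 0 t ⊆ Icc 0 T := Icc_subset_Icc le_rfl ht.2
  have hc0 : ℓ 0 ≤ c := hℓ0.symm ▸ (le_max_right _ _).trans (hc 0 (left_mem_Icc.2 ht.1))
  by_contra! hlt
  obtain ⟨s₀, hs₀, hs₀c, hgt⟩ := (hℓc.mono hsub).exists_le_forall_Ioc_lt ht.1 hc0 hlt
  have hs₀T : s₀ ∈ Icc 0 T := hsub (Ico_subset_Icc_self hs₀)
  have hfree : Ioc s₀ t ⊆ {s ∈ Icc 0 T | a s < g s} := by
    intro s hs
    have hsIcc : s ∈ Icc 0 t := ⟨hs₀.1.trans hs.1.le, hs.2⟩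
    have hafs : a s - f s ≤ c := (le_max_left _ _).trans (hc s hsIcc)
    exact ⟨hsub hsIcc, by linarith [hgf s (hsub hsIcc), hgt s hs]⟩
  have hnoinc := L.le_of_measure_Ioc_eq_zero (measure_mono_null hfree hLzero)
  rw [hL t ht, hL s₀ hs₀T] at hnoinc
  linarith

theorem stmt1_general (T : ℝ) (f a g ℓ : ℝ → ℝ)
    (hℓc : ContinuousOn ℓ (Set.Icc 0 T))
    (hgf : ∀ t ∈ Set.Icc 0 T, g t = f t + ℓ t)
    (hℓ0 : ℓ 0 = 0) (hℓm : MonotoneOn ℓ (Set.Icc 0 T))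
    (hga : ∀ t ∈ Set.Icc 0 T, a t ≤ g t)
    (L : StieltjesFunction ℝ) (hL : ∀ t, L t = ℓ (min (max t 0) T))
    (hLzero : L.measure {t ∈ Set.Icc 0 T | a t < g t} = 0) :
    ∀ t ∈ Set.Icc 0 T,
      ℓ t = sSup ((fun s => max (a s - f s) 0) '' Set.Icc 0 t) ∧
      g t = f t + sSup ((fun s => max (a s - f s) 0) '' Set.Icc 0 t) := by
  intro t ht
  have hLℓ : ∀ s ∈ Icc 0 T, L s = ℓ s := fun s hs => by
    rw [hL s, max_eq_left hs.1, min_eq_left hs.2]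
  have hlub : IsLUB ((fun s => max (a s - f s) 0) '' Icc 0 t) (ℓ t) :=
    ⟨forall_mem_image.2 (max_sub_le_regulator hgf hℓ0 hℓm hga ht),
      fun c hc => regulator_le_of_forall_max_sub_le hℓc hgf hℓ0 hLℓ hLzero ht
        (forall_mem_image.1 hc)⟩
  have hsup := hlub.csSup_eq ((nonempty_Icc.2 ht.1).image _)
  exact ⟨hsup.symm, by rw [hgf t ht, hsup]⟩

/-- If `(g, ℓ)` solves the dynamic Skorokhod problem `DSP(f, a)`
(with `f, a` continuous on `[0,T]` and `f 0 ≥ a 0`), i.e. `g = f + ℓ` on `[0,T]`,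
`ℓ` is continuous nondecreasing with `ℓ 0 = 0`, `g ≥ a` on `[0,T]`, and the
Lebesgue–Stieltjes measure of `ℓ` (encoded by a Stieltjes function `L` agreeing with the
clamped extension of `ℓ`) gives zero mass to `{t ∈ [0,T] | g t > a t}`, then
`ℓ t = sup_{s ∈ [0,t]} max (a s - f s) 0` and `g t = f t + sup_{s ∈ [0,t]} max (a s - f s) 0`
for every `t ∈ [0,T]`; in particular the solution is unique. -/
theorem stmt1 (T : ℝ) (hT : 0 < T) (f a g ℓ : ℝ → ℝ)
    (hf : ContinuousOn f (Set.Icc 0 T)) (ha : ContinuousOn a (Set.Icc 0 T))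
    (h0 : a 0 ≤ f 0)
    (hgc : ContinuousOn g (Set.Icc 0 T)) (hℓc : ContinuousOn ℓ (Set.Icc 0 T))
    (hgf : ∀ t ∈ Set.Icc 0 T, g t = f t + ℓ t)
    (hℓ0 : ℓ 0 = 0) (hℓm : MonotoneOn ℓ (Set.Icc 0 T))
    (hga : ∀ t ∈ Set.Icc 0 T, a t ≤ g t)
    (L : StieltjesFunction ℝ) (hL : ∀ t, L t = ℓ (min (max t 0) T))
    (hLzero : L.measure {t ∈ Set.Icc 0 T | a t < g t} = 0) :
    ∀ t ∈ Set.Icc 0 T,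
      ℓ t = sSup ((fun s => max (a s - f s) 0) '' Set.Icc 0 t) ∧
      g t = f t + sSup ((fun s => max (a s - f s) 0) '' Set.Icc 0 t) :=
  stmt1_general T f a g ℓ hℓc hgf hℓ0 hℓm hga L hL hLzero
end

section
/- Let T > 0 and, for i = 1, 2, let a_i, f_i : [0,T] → ℝ be continuous with f_i(0) ≥ a_i(0). Then the dynamic Skorokhod map Γ satisfies the Lipschitz estimate sup_{t∈[0,T]} |Γ(a₁,f₁)(t) − Γ(a₂,f₂)(t)| ≤ 2 sup_{t∈[0,T]} |f₁(t) − f₂(t)| + sup_{t∈[0,T]} |a₁(t) − a₂(t)|. -/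
/-!
`Γ(a,f) - f` is the running supremum of `(a - f)⁺`. Taking suprema over a common set is
`1`-Lipschitz for the sup norm, and so is `x ↦ x⁺`, so this part moves by at most
`‖f₁ - f₂‖ + ‖a₁ - a₂‖`; the summand `f` contributes another `‖f₁ - f₂‖`.
-/

open Set

theorem abs_csSup_image_sub_csSup_image_le {α : Type*} {S : Set α} {u v : α → ℝ} {c : ℝ}
    (hS : S.Nonempty) (hu : BddAbove (u '' S)) (hv : BddAbove (v '' S))
    (huv : ∀ s ∈ S, |u s - v s| ≤ c) :
    |sSup (u '' S) - sSup (v '' S)| ≤ c := by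
  have sSup_le_add {u v : α → ℝ} (hv : BddAbove (v '' S)) (huv : ∀ s ∈ S, u s ≤ v s + c) :
      sSup (u '' S) ≤ sSup (v '' S) + c :=
    csSup_le (hS.image u) <| forall_mem_image.2 fun s hs =>
      (huv s hs).trans (add_le_add_left (le_csSup hv (mem_image_of_mem v hs)) c)
  rw [abs_sub_le_iff]
  constructor
  · linarith [sSup_le_add (u := u) hv fun s hs => by linarith [(abs_sub_le_iff.1 (huv s hs)).1]]
  · linarith [sSup_le_add (u := v) hu fun s hs => by linarith [(abs_sub_le_iff.1 (huv s hs)).2]]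

theorem abs_sSup_max_sub_sSup_max_le {X : Type*} [TopologicalSpace X] {K S : Set X}
    (hK : IsCompact K) (hSK : S ⊆ K) (hS : S.Nonempty) {a₁ f₁ a₂ f₂ : X → ℝ}
    (ha₁ : ContinuousOn a₁ K) (hf₁ : ContinuousOn f₁ K)
    (ha₂ : ContinuousOn a₂ K) (hf₂ : ContinuousOn f₂ K) :
    |sSup ((fun s => max (a₁ s - f₁ s) 0) '' S) - sSup ((fun s => max (a₂ s - f₂ s) 0) '' S)| ≤
      sSup ((fun s => |f₁ s - f₂ s|) '' K) + sSup ((fun s => |a₁ s - a₂ s|) '' K) := by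
  have bdd {a f : X → ℝ} (ha : ContinuousOn a K) (hf : ContinuousOn f K) :
      BddAbove ((fun s => max (a s - f s) 0) '' S) :=
    (hK.bddAbove_image ((ha.sub hf).sup continuousOn_const)).mono (image_mono hSK)
  refine abs_csSup_image_sub_csSup_image_le hS (bdd ha₁ hf₁) (bdd ha₂ hf₂) fun s hs => ?_
  have hf : |f₁ s - f₂ s| ≤ sSup ((fun s => |f₁ s - f₂ s|) '' K) :=
    le_csSup (hK.bddAbove_image (hf₁.sub hf₂).abs) (mem_image_of_mem _ (hSK hs))
  have ha : |a₁ s - a₂ s| ≤ sSup ((fun s => |a₁ s - a₂ s|) '' K) :=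
    le_csSup (hK.bddAbove_image (ha₁.sub ha₂).abs) (mem_image_of_mem _ (hSK hs))
  calc |max (a₁ s - f₁ s) 0 - max (a₂ s - f₂ s) 0|
      ≤ |(a₁ s - f₁ s) - (a₂ s - f₂ s)| := abs_max_sub_max_le_abs _ _ _
    _ = |(a₁ s - a₂ s) - (f₁ s - f₂ s)| := by ring_nf
    _ ≤ |a₁ s - a₂ s| + |f₁ s - f₂ s| := abs_sub _ _
    _ ≤ _ := by linarith

theorem stmt2_general (T : ℝ) (a₁ f₁ a₂ f₂ : ℝ → ℝ)
    (ha₁ : ContinuousOn a₁ (Set.Icc 0 T)) (hf₁ : ContinuousOn f₁ (Set.Icc 0 T))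
    (ha₂ : ContinuousOn a₂ (Set.Icc 0 T)) (hf₂ : ContinuousOn f₂ (Set.Icc 0 T))
    (g₁ g₂ : ℝ → ℝ)
    (hg₁ : ∀ t, g₁ t = f₁ t + sSup ((fun s => max (a₁ s - f₁ s) 0) '' Set.Icc 0 t))
    (hg₂ : ∀ t, g₂ t = f₂ t + sSup ((fun s => max (a₂ s - f₂ s) 0) '' Set.Icc 0 t)) :
    ∀ t ∈ Set.Icc 0 T,
      |g₁ t - g₂ t| ≤ 2 * sSup ((fun s => |f₁ s - f₂ s|) '' Set.Icc 0 T)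
        + sSup ((fun s => |a₁ s - a₂ s|) '' Set.Icc 0 T) := by
  intro t ht
  have hft : |f₁ t - f₂ t| ≤ sSup ((fun s => |f₁ s - f₂ s|) '' Set.Icc 0 T) :=
    le_csSup (isCompact_Icc.bddAbove_image (hf₁.sub hf₂).abs) (mem_image_of_mem _ ht)
  have hsup := abs_sSup_max_sub_sSup_max_le isCompact_Icc (Icc_subset_Icc_right ht.2)
    (nonempty_Icc.2 ht.1) ha₁ hf₁ ha₂ hf₂
  rw [hg₁, hg₂, add_sub_add_comm]
  linarith [abs_add_le (f₁ t - f₂ t) (sSup ((fun s => max (a₁ s - f₁ s) 0) '' Icc 0 t) -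
    sSup ((fun s => max (a₂ s - f₂ s) 0) '' Icc 0 t))]

/-- Lipschitz continuity of the dynamic Skorokhod map
`Γ(a,f)(t) = f t + sup_{s ∈ [0,t]} max (a s - f s) 0`:
for continuous `a_i, f_i` on `[0,T]` with `f_i 0 ≥ a_i 0`,
`sup_{t ∈ [0,T]} |Γ(a₁,f₁) t - Γ(a₂,f₂) t| ≤ 2 sup_{t ∈ [0,T]} |f₁ t - f₂ t|
  + sup_{t ∈ [0,T]} |a₁ t - a₂ t|`. -/
theorem stmt2 (T : ℝ) (hT : 0 < T) (a₁ f₁ a₂ f₂ : ℝ → ℝ)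
    (ha₁ : ContinuousOn a₁ (Set.Icc 0 T)) (hf₁ : ContinuousOn f₁ (Set.Icc 0 T))
    (ha₂ : ContinuousOn a₂ (Set.Icc 0 T)) (hf₂ : ContinuousOn f₂ (Set.Icc 0 T))
    (h01 : a₁ 0 ≤ f₁ 0) (h02 : a₂ 0 ≤ f₂ 0)
    (g₁ g₂ : ℝ → ℝ)
    (hg₁ : ∀ t, g₁ t = f₁ t + sSup ((fun s => max (a₁ s - f₁ s) 0) '' Set.Icc 0 t))
    (hg₂ : ∀ t, g₂ t = f₂ t + sSup ((fun s => max (a₂ s - f₂ s) 0) '' Set.Icc 0 t)) :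
    ∀ t ∈ Set.Icc 0 T,
      |g₁ t - g₂ t| ≤ 2 * sSup ((fun s => |f₁ s - f₂ s|) '' Set.Icc 0 T)
        + sSup ((fun s => |a₁ s - a₂ s|) '' Set.Icc 0 T) :=
  stmt2_general T a₁ f₁ a₂ f₂ ha₁ hf₁ ha₂ hf₂ g₁ g₂ hg₁ hg₂
end

section
/- Let U ⊂ ℝ^l be compact and let (Ω,ℱ,P) be a probability space. Let q₁, q₂ : Ω → 𝒫(U) be measurable maps into the space of Borel probability measures on U (measurable with respect to the Borel σ-algebra of the W_{2,U} topology). Define the mean measures q̄_i(B) := ∫_Ω q_i(ω)(B) P(dω) for Borel B ⊆ U, i = 1,2. Then W_{2,U}(q̄₁, q̄₂)² ≤ ∫_Ω W_{2,U}(q₁(ω), q₂(ω))² P(dω). -/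
/-!
If `κ ω` is a coupling of `q₁ ω` and `q₂ ω` depending measurably on `ω`, then `P.bind κ` is a
coupling of the mean measures whose cost is `∫ cost (κ ω) dP`; so it suffices to choose
`ε`-optimal couplings measurably in `ω`. On a compact space a countable family of such
measurable couplings is dense in cost: partition `U` into finitely many small cells `B i`,
approximate the cell masses `π (B i × B j)` of a near-optimal coupling `π` from below by
rationals, round this plan to the exact block marginals, and couple the blocks independently.
The cost changes only by the oscillation of `dist²` on cells and by the small mass the rounding
moves. Choosing the first `ε`-optimal member of the family is then measurable in `ω`.
-/

open Set MeasureTheory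

/-- The squared 2-Wasserstein "distance" between two measures on `E`, relative to an
explicit squared-cost function `c`: the infimum over all couplings `π` of `μ` and `ν`
of `∫ c(x, y) dπ`. -/
noncomputable def W2sq {E : Type*} [MeasurableSpace E] (c : E → E → ℝ)
    (μ ν : Measure E) : ℝ :=
  sInf {r : ℝ | ∃ π : Measure (E × E),
    π.map Prod.fst = μ ∧ π.map Prod.snd = ν ∧ r = ∫ p, c p.1 p.2 ∂π}

open scoped ENNReal ProbabilityTheory

section Coupling

variable {E : Type*} [MeasurableSpace E]

structure IsCoupling (π : Measure (E × E)) (μ ν : Measure E) : Prop where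
  map_fst : π.map Prod.fst = μ
  map_snd : π.map Prod.snd = ν

noncomputable def transportCost (c : E → E → ℝ) (π : Measure (E × E)) : ℝ≥0∞ :=
  ∫⁻ z, ENNReal.ofReal (c z.1 z.2) ∂π

variable {c : E → E → ℝ} {μ ν : Measure E} {π : Measure (E × E)}

lemma IsCoupling.isProbabilityMeasure [IsProbabilityMeasure μ] (h : IsCoupling π μ ν) :
    IsProbabilityMeasure π :=
  have : IsProbabilityMeasure (π.map Prod.fst) := h.map_fst ▸ inferInstance
  Measure.isProbabilityMeasure_of_map Prod.fst

lemma isCoupling_prod (μ ν : Measure E) [IsProbabilityMeasure μ] [IsProbabilityMeasure ν] :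
    IsCoupling (μ.prod ν) μ ν :=
  ⟨by simp, by simp⟩

lemma W2sq_le_integral (hc : ∀ x y, 0 ≤ c x y) (h : IsCoupling π μ ν) :
    W2sq c μ ν ≤ ∫ z, c z.1 z.2 ∂π :=
  csInf_le ⟨0, fun _ ⟨_, _, _, hr⟩ => hr ▸ integral_nonneg fun _ => hc _ _⟩
    ⟨π, h.map_fst, h.map_snd, rfl⟩

lemma W2sq_nonneg (hc : ∀ x y, 0 ≤ c x y) : 0 ≤ W2sq c μ ν :=
  Real.sInf_nonneg fun _ ⟨_, _, _, hr⟩ => hr ▸ integral_nonneg fun _ => hc _ _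

lemma exists_isCoupling_integral_lt (μ ν : Measure E) [IsProbabilityMeasure μ]
    [IsProbabilityMeasure ν] {ε : ℝ} (hε : 0 < ε) :
    ∃ π, IsCoupling π μ ν ∧ ∫ z, c z.1 z.2 ∂π < W2sq c μ ν + ε := by
  have hne : {r : ℝ | ∃ π : Measure (E × E), π.map Prod.fst = μ ∧ π.map Prod.snd = ν ∧
      r = ∫ z, c z.1 z.2 ∂π}.Nonempty :=
    ⟨_, μ.prod ν, (isCoupling_prod μ ν).map_fst, (isCoupling_prod μ ν).map_snd, rfl⟩
  obtain ⟨_, ⟨π, h₁, h₂, rfl⟩, hlt⟩ := Real.lt_sInf_add_pos hne hε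
  exact ⟨π, ⟨h₁, h₂⟩, hlt⟩

lemma integral_eq_toReal_transportCost (hcm : Measurable fun z : E × E => c z.1 z.2)
    (hc : ∀ x y, 0 ≤ c x y) (π : Measure (E × E)) :
    ∫ z, c z.1 z.2 ∂π = (transportCost c π).toReal :=
  integral_eq_lintegral_of_nonneg_ae (.of_forall fun _ => hc _ _) hcm.aestronglyMeasurable

lemma transportCost_le_ofReal {D : ℝ} (hcD : ∀ x y, c x y ≤ D) [IsProbabilityMeasure μ]
    (h : IsCoupling π μ ν) : transportCost c π ≤ ENNReal.ofReal D := by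
  have := h.isProbabilityMeasure
  calc transportCost c π ≤ ∫⁻ _, ENNReal.ofReal D ∂π :=
        lintegral_mono fun z => ENNReal.ofReal_le_ofReal (hcD _ _)
    _ = ENNReal.ofReal D := by simp

lemma ofReal_W2sq_eq_iInf (hcm : Measurable fun z : E × E => c z.1 z.2) (hc : ∀ x y, 0 ≤ c x y)
    {D : ℝ} (hcD : ∀ x y, c x y ≤ D) (μ ν : Measure E) [IsProbabilityMeasure μ]
    [IsProbabilityMeasure ν] :
    ENNReal.ofReal (W2sq c μ ν) = ⨅ (π) (_ : IsCoupling π μ ν), transportCost c π := by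
  have hcost : ∀ π, IsCoupling π μ ν → transportCost c π = ENNReal.ofReal (∫ z, c z.1 z.2 ∂π) :=
    fun π h => by
      rw [integral_eq_toReal_transportCost hcm hc,
        ENNReal.ofReal_toReal (ne_top_of_le_ne_top ENNReal.ofReal_ne_top
          (transportCost_le_ofReal hcD h))]
  refine le_antisymm (le_iInf₂ fun π h => ?_) (ENNReal.le_of_forall_pos_le_add fun ε hε _ => ?_)
  · exact hcost π h ▸ ENNReal.ofReal_le_ofReal (W2sq_le_integral hc h)
  · obtain ⟨π, h, hlt⟩ := exists_isCoupling_integral_lt (c := c) μ ν hε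
    calc ⨅ (π) (_ : IsCoupling π μ ν), transportCost c π ≤ transportCost c π := iInf₂_le π h
      _ ≤ ENNReal.ofReal (W2sq c μ ν + ε) := hcost π h ▸ ENNReal.ofReal_le_ofReal hlt.le
      _ = ENNReal.ofReal (W2sq c μ ν) + ε := by
        rw [ENNReal.ofReal_add (W2sq_nonneg hc) ε.coe_nonneg, ENNReal.ofReal_coe_nnreal]

lemma ofReal_W2sq_eq_iInf_of_forall_iInf_le (hcm : Measurable fun z : E × E => c z.1 z.2)
    (hc : ∀ x y, 0 ≤ c x y) {D : ℝ} (hcD : ∀ x y, c x y ≤ D) [IsProbabilityMeasure μ]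
    [IsProbabilityMeasure ν] {G : ℕ → Measure (E × E)} (hG : ∀ n, IsCoupling (G n) μ ν)
    (hG_inf : ∀ π, IsCoupling π μ ν → ⨅ n, transportCost c (G n) ≤ transportCost c π) :
    ENNReal.ofReal (W2sq c μ ν) = ⨅ n, transportCost c (G n) := by
  rw [ofReal_W2sq_eq_iInf hcm hc hcD]
  exact le_antisymm (le_iInf fun n => iInf₂_le (G n) (hG n)) (le_iInf₂ hG_inf)

lemma IsCoupling.bind {Ω : Type*} [MeasurableSpace Ω] (P : Measure Ω) {q₁ q₂ : Ω → Measure E}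
    (hq₁ : Measurable q₁) (hq₂ : Measurable q₂) {κ : Ω → Measure (E × E)} (hκ : Measurable κ)
    (h : ∀ ω, IsCoupling (κ ω) (q₁ ω) (q₂ ω)) : IsCoupling (P.bind κ) (P.bind q₁) (P.bind q₂) := by
  constructor <;> ext s hs
  · rw [Measure.map_apply measurable_fst hs, Measure.bind_apply (measurable_fst hs) hκ.aemeasurable,
      Measure.bind_apply hs hq₁.aemeasurable]
    exact lintegral_congr fun ω => by rw [← (h ω).map_fst, Measure.map_apply measurable_fst hs]
  · rw [Measure.map_apply measurable_snd hs, Measure.bind_apply (measurable_snd hs) hκ.aemeasurable,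
      Measure.bind_apply hs hq₂.aemeasurable]
    exact lintegral_congr fun ω => by rw [← (h ω).map_snd, Measure.map_apply measurable_snd hs]

end Coupling

section Partition

open Function

variable {ι E : Type*} [MeasurableSpace E]

structure IsMeasurablePartition (B : ι → Set E) : Prop where
  measurableSet : ∀ i, MeasurableSet (B i)
  pairwise_disjoint : Pairwise (Disjoint on B)
  iUnion_eq : ⋃ i, B i = univ

namespace IsMeasurablePartition

variable {B : ι → Set E}

lemma preimage (hB : IsMeasurablePartition B) {F : Type*} [MeasurableSpace F] {f : F → E}
    (hf : Measurable f) : IsMeasurablePartition fun i => f ⁻¹' B i :=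
  ⟨fun i => hf (hB.measurableSet i), fun _ _ hij => (hB.pairwise_disjoint hij).preimage f,
    by rw [← preimage_iUnion, hB.iUnion_eq, preimage_univ]⟩

lemma prod (hB : IsMeasurablePartition B) {κ F : Type*} [MeasurableSpace F] {C : κ → Set F}
    (hC : IsMeasurablePartition C) : IsMeasurablePartition fun k : ι × κ => B k.1 ×ˢ C k.2 := by
  refine ⟨fun k => (hB.measurableSet k.1).prod (hC.measurableSet k.2), fun k l hkl => ?_,
    by rw [iUnion_prod, hB.iUnion_eq, hC.iUnion_eq, univ_prod_univ]⟩
  rcases ne_or_eq k.1 l.1 with h | h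
  · exact disjoint_prod.mpr (Or.inl (hB.pairwise_disjoint h))
  · exact disjoint_prod.mpr (Or.inr (hC.pairwise_disjoint fun h' => hkl (Prod.ext h h')))

lemma sum_measure_inter [Fintype ι] (hB : IsMeasurablePartition B) (μ : Measure E) {s : Set E}
    (hs : MeasurableSet s) : ∑ i, μ (s ∩ B i) = μ s := by
  conv_rhs => rw [← inter_univ s, ← hB.iUnion_eq, inter_iUnion]
  rw [measure_iUnion (fun i j hij => (hB.pairwise_disjoint hij).mono inter_subset_right
    inter_subset_right) fun i => hs.inter (hB.measurableSet i), tsum_fintype]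

lemma sum_measure [Fintype ι] (hB : IsMeasurablePartition B) (μ : Measure E) :
    ∑ i, μ (B i) = μ univ := by
  simpa using hB.sum_measure_inter μ .univ

lemma sum_setLIntegral [Fintype ι] (hB : IsMeasurablePartition B) (μ : Measure E)
    (f : E → ℝ≥0∞) : ∑ i, ∫⁻ x in B i, f x ∂μ = ∫⁻ x, f x ∂μ := by
  rw [← setLIntegral_univ, ← hB.iUnion_eq, lintegral_iUnion hB.measurableSet hB.pairwise_disjoint,
    tsum_fintype]

end IsMeasurablePartition

end Partition

section BlockCoupling

open ProbabilityTheory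

variable {ι E Ω : Type*} [Fintype ι] [MeasurableSpace E] [MeasurableSpace Ω]

noncomputable def blockCoupling (B : ι → Set E) (g : ι → ι → ℝ≥0∞) (μ ν : Measure E) :
    Measure (E × E) :=
  ∑ k : ι × ι, g k.1 k.2 • (μ[|B k.1]).prod (ν[|B k.2])

variable {B : ι → Set E} {g : ι → ι → ℝ≥0∞} {μ ν : Measure E}

lemma blockCoupling_apply_prod (B : ι → Set E) (g : ι → ι → ℝ≥0∞) (μ ν : Measure E)
    (s t : Set E) :
    blockCoupling B g μ ν (s ×ˢ t) = ∑ k : ι × ι, g k.1 k.2 * (μ[|B k.1] s * ν[|B k.2] t) := by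
  simp [blockCoupling, Measure.prod_prod]

lemma mul_cond_univ [IsFiniteMeasure μ] {s : Set E} {a : ℝ≥0∞} (h : a ≤ μ s) :
    a * μ[|s] univ = a := by
  rcases eq_or_ne (μ s) 0 with h0 | h0
  · rw [le_antisymm (h.trans h0.le) zero_le, zero_mul]
  · have := cond_isProbabilityMeasure (μ := μ) h0
    rw [measure_univ, mul_one]

lemma isCoupling_blockCoupling (hB : IsMeasurablePartition B) [IsFiniteMeasure μ]
    [IsFiniteMeasure ν] (hrow : ∀ i, ∑ j, g i j = μ (B i)) (hcol : ∀ j, ∑ i, g i j = ν (B j)) :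
    IsCoupling (blockCoupling B g μ ν) μ ν := by
  have hle_row : ∀ i j, g i j ≤ μ (B i) := fun i j =>
    (Finset.single_le_sum (f := g i) (fun _ _ => zero_le) (Finset.mem_univ j)).trans_eq (hrow i)
  have hle_col : ∀ i j, g i j ≤ ν (B j) := fun i j =>
    (Finset.single_le_sum (f := (g · j)) (fun _ _ => zero_le) (Finset.mem_univ i)).trans_eq
      (hcol j)
  constructor <;> ext s hs
  · rw [Measure.map_apply measurable_fst hs, ← prod_univ, blockCoupling_apply_prod,
      Fintype.sum_prod_type, ← hB.sum_measure_inter μ hs]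
    refine Finset.sum_congr rfl fun i _ => ?_
    calc ∑ j, g i j * (μ[|B i] s * ν[|B j] univ) = ∑ j, g i j * μ[|B i] s :=
          Finset.sum_congr rfl fun j _ => by
            rw [mul_comm (μ[|B i] s), ← mul_assoc, mul_cond_univ (hle_col i j)]
      _ = μ (s ∩ B i) := by
          rw [← Finset.sum_mul, hrow, mul_comm (μ (B i)), cond_mul_eq_inter (hB.measurableSet i),
            inter_comm]
  · rw [Measure.map_apply measurable_snd hs, ← univ_prod, blockCoupling_apply_prod,
      Fintype.sum_prod_type_right, ← hB.sum_measure_inter ν hs]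
    refine Finset.sum_congr rfl fun j _ => ?_
    calc ∑ i, g i j * (μ[|B i] univ * ν[|B j] s) = ∑ i, g i j * ν[|B j] s :=
          Finset.sum_congr rfl fun i _ => by rw [← mul_assoc, mul_cond_univ (hle_row i j)]
      _ = ν (s ∩ B j) := by
          rw [← Finset.sum_mul, hcol, mul_comm (ν (B j)), cond_mul_eq_inter (hB.measurableSet j),
            inter_comm]

lemma lintegral_blockCoupling_le (hB : ∀ i, MeasurableSet (B i)) (g : ι → ι → ℝ≥0∞)
    (μ ν : Measure E) {f : E × E → ℝ≥0∞} {w : ι → ι → ℝ≥0∞}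
    (hw : ∀ i j, ∀ z ∈ B i ×ˢ B j, f z ≤ w i j) :
    ∫⁻ z, f z ∂blockCoupling B g μ ν ≤ ∑ k : ι × ι, g k.1 k.2 * w k.1 k.2 := by
  rw [blockCoupling, lintegral_finsetSum_measure]
  refine Finset.sum_le_sum fun k _ => ?_
  rw [lintegral_smul_measure, smul_eq_mul]
  gcongr
  have hmem : ∀ᵐ z ∂(μ[|B k.1]).prod (ν[|B k.2]), z ∈ B k.1 ×ˢ B k.2 :=
    (Measure.quasiMeasurePreserving_fst.ae (ae_cond_mem (hB k.1))).and
      (Measure.quasiMeasurePreserving_snd.ae (ae_cond_mem (hB k.2)))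
  calc ∫⁻ z, f z ∂(μ[|B k.1]).prod (ν[|B k.2])
      ≤ ∫⁻ _, w k.1 k.2 ∂(μ[|B k.1]).prod (ν[|B k.2]) :=
        lintegral_mono_ae (hmem.mono fun z hz => hw _ _ z hz)
    _ ≤ w k.1 k.2 := by
        rw [lintegral_const, ← univ_prod_univ, Measure.prod_prod]
        exact mul_le_of_le_one_right' (mul_le_one' prob_le_one prob_le_one)

lemma measurable_cond {μ : Ω → Measure E} (hμ : Measurable μ) {s : Set E}
    (hs : MeasurableSet s) : Measurable fun ω => (μ ω)[|s] :=
  Measure.measurable_of_measurable_coe _ fun t ht => by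
    simp_rw [cond_apply hs]
    exact ((Measure.measurable_coe hs).comp hμ).inv.mul
      ((Measure.measurable_coe (hs.inter ht)).comp hμ)

lemma measurable_prod_measure {F : Type*} [MeasurableSpace F] {μ : Ω → Measure E}
    {ν : Ω → Measure F} (hμ : Measurable μ) (hν : Measurable ν)
    [∀ ω, IsZeroOrProbabilityMeasure (μ ω)] [∀ ω, IsZeroOrProbabilityMeasure (ν ω)] :
    Measurable fun ω => (μ ω).prod (ν ω) := by
  let κ : Kernel Ω E := ⟨μ, hμ⟩
  let η : Kernel Ω F := ⟨ν, hν⟩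
  have : IsFiniteKernel κ := ⟨⟨1, ENNReal.one_lt_top, fun _ => prob_le_one⟩⟩
  have : IsFiniteKernel η := ⟨⟨1, ENNReal.one_lt_top, fun _ => prob_le_one⟩⟩
  exact (funext fun ω => Kernel.prod_apply κ η ω) ▸ (κ ×ₖ η).measurable

lemma measurable_blockCoupling (hB : ∀ i, MeasurableSet (B i)) {g : Ω → ι → ι → ℝ≥0∞}
    (hg : ∀ i j, Measurable fun ω => g ω i j) {μ ν : Ω → Measure E} (hμ : Measurable μ)
    (hν : Measurable ν) : Measurable fun ω => blockCoupling B (g ω) (μ ω) (ν ω) := by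
  refine Measure.measurable_of_measurable_coe _ fun s hs => ?_
  simp only [blockCoupling, Measure.coe_finsetSum, Finset.sum_apply, Measure.smul_apply,
    smul_eq_mul]
  exact Finset.measurable_sum _ fun k _ => (hg _ _).mul ((Measure.measurable_coe hs).comp
    (measurable_prod_measure (measurable_cond hμ (hB _)) (measurable_cond hν (hB _))))

end BlockCoupling

section PlanRounding

variable {ι : Type*} [Fintype ι]

-- A variant of the rounding of Altschuler, Weed and Rigollet (2017): scale `g` down below the
-- marginals `p`, `q`, then spread the missing mass as the normalized outer product of the row
-- and column deficits.
noncomputable def truncatePlan (p q : ι → ℝ≥0∞) (g : ι → ι → ℝ≥0∞) (i j : ι) : ℝ≥0∞ :=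
  g i j * min 1 (min (p i / ∑ j', g i j') (q j / ∑ i', g i' j))

noncomputable def completePlan (p q : ι → ℝ≥0∞) (t : ι → ι → ℝ≥0∞) (i j : ι) : ℝ≥0∞ :=
  t i j + (p i - ∑ j', t i j') * (q j - ∑ i', t i' j) / ∑ i', (p i' - ∑ j', t i' j')

noncomputable def roundPlan (p q : ι → ℝ≥0∞) (g : ι → ι → ℝ≥0∞) : ι → ι → ℝ≥0∞ :=
  completePlan p q (truncatePlan p q g)

variable {p q : ι → ℝ≥0∞}

lemma sum_truncatePlan_le_left (g : ι → ι → ℝ≥0∞) (i : ι) :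
    ∑ j, truncatePlan p q g i j ≤ p i :=
  calc ∑ j, truncatePlan p q g i j ≤ ∑ j, g i j * (p i / ∑ j', g i j') :=
        Finset.sum_le_sum fun _ _ => by
          unfold truncatePlan
          gcongr
          exact (min_le_right _ _).trans (min_le_left _ _)
    _ = (∑ j, g i j) * (p i / ∑ j', g i j') := (Finset.sum_mul ..).symm
    _ ≤ p i := ENNReal.mul_div_le

lemma sum_truncatePlan_le_right (g : ι → ι → ℝ≥0∞) (j : ι) :
    ∑ i, truncatePlan p q g i j ≤ q j :=
  calc ∑ i, truncatePlan p q g i j ≤ ∑ i, g i j * (q j / ∑ i', g i' j) :=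
        Finset.sum_le_sum fun _ _ => by
          unfold truncatePlan
          gcongr
          exact (min_le_right _ _).trans (min_le_right _ _)
    _ = (∑ i, g i j) * (q j / ∑ i', g i' j) := (Finset.sum_mul ..).symm
    _ ≤ q j := ENNReal.mul_div_le

lemma truncatePlan_eq_self (hp : ∀ i, p i ≠ ∞) (hq : ∀ j, q j ≠ ∞) {g : ι → ι → ℝ≥0∞}
    (hrow : ∀ i, ∑ j, g i j ≤ p i) (hcol : ∀ j, ∑ i, g i j ≤ q j) : truncatePlan p q g = g := by
  funext i j
  rcases eq_or_ne (g i j) 0 with hg | hg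
  · simp [truncatePlan, hg]
  have hle_row : g i j ≤ ∑ j', g i j' := Finset.single_le_sum (f := g i) (by simp) (by simp)
  have hle_col : g i j ≤ ∑ i', g i' j := Finset.single_le_sum (f := (g · j)) (by simp) (by simp)
  have one_le_div {a b : ℝ≥0∞} (ha : a ≠ 0) (hab : a ≤ b) (hb : b ≠ ∞) : 1 ≤ b / a :=
    (ENNReal.le_div_iff_mul_le (.inl ha) (.inl (ne_top_of_le_ne_top hb hab))).2 (by rwa [one_mul])
  rw [truncatePlan, min_eq_left (le_min
    (one_le_div (ne_bot_of_le_ne_bot hg hle_row) (hrow i) (hp i))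
    (one_le_div (ne_bot_of_le_ne_bot hg hle_col) (hcol j) (hq j))), mul_one]

lemma sum_mul_div_sum_of_sum_eq {κ : Type*} [Fintype κ] {a : ι → ℝ≥0∞} {b : κ → ℝ≥0∞}
    (h : ∑ i, a i = ∑ k, b k) (hfin : ∑ i, a i ≠ ∞) (i : ι) :
    ∑ k, a i * b k / ∑ i', a i' = a i := by
  rcases eq_or_ne (∑ i', a i') 0 with h0 | h0
  · simp [Finset.sum_eq_zero_iff.mp h0 i (Finset.mem_univ i)]
  · simp_rw [div_eq_mul_inv, mul_assoc, ← Finset.mul_sum, ← Finset.sum_mul, ← h,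
      ENNReal.mul_inv_cancel h0 hfin, mul_one]

lemma ENNReal.sum_tsub_of_le {κ : Type*} [Fintype κ] {a b : κ → ℝ≥0∞} (h : ∀ k, b k ≤ a k)
    (hb : ∑ k, b k ≠ ∞) : ∑ k, (a k - b k) = ∑ k, a k - ∑ k, b k :=
  ENNReal.eq_sub_of_add_eq hb <| by
    rw [← Finset.sum_add_distrib]
    exact Finset.sum_congr rfl fun k _ => tsub_add_cancel_of_le (h k)

variable {t : ι → ι → ℝ≥0∞}

lemma sum_deficit_eq (hrow : ∀ i, ∑ j, t i j ≤ p i) (hcol : ∀ j, ∑ i, t i j ≤ q j)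
    (hpq : ∑ i, p i = ∑ j, q j) (hfin : ∑ i, p i ≠ ∞) :
    ∑ i, (p i - ∑ j, t i j) = ∑ j, (q j - ∑ i, t i j) := by
  have hsum_le : ∑ i, ∑ j, t i j ≤ ∑ i, p i := Finset.sum_le_sum fun i _ => hrow i
  rw [ENNReal.sum_tsub_of_le hrow (ne_top_of_le_ne_top hfin hsum_le),
    ENNReal.sum_tsub_of_le hcol (Finset.sum_comm (f := t) ▸ ne_top_of_le_ne_top hfin hsum_le),
    Finset.sum_comm (f := t), hpq]

lemma sum_completePlan_left (hrow : ∀ i, ∑ j, t i j ≤ p i) (hcol : ∀ j, ∑ i, t i j ≤ q j)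
    (hpq : ∑ i, p i = ∑ j, q j) (hfin : ∑ i, p i ≠ ∞) (i : ι) :
    ∑ j, completePlan p q t i j = p i := by
  have hfin' : ∑ i, (p i - ∑ j, t i j) ≠ ∞ :=
    ne_top_of_le_ne_top hfin (Finset.sum_le_sum fun _ _ => tsub_le_self)
  simp only [completePlan]
  rw [Finset.sum_add_distrib, sum_mul_div_sum_of_sum_eq (sum_deficit_eq hrow hcol hpq hfin) hfin' i,
    add_tsub_cancel_of_le (hrow i)]

lemma sum_completePlan_right (hrow : ∀ i, ∑ j, t i j ≤ p i) (hcol : ∀ j, ∑ i, t i j ≤ q j)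
    (hpq : ∑ i, p i = ∑ j, q j) (hfin : ∑ i, p i ≠ ∞) (j : ι) :
    ∑ i, completePlan p q t i j = q j := by
  have hdef := sum_deficit_eq hrow hcol hpq hfin
  have hfin' : ∑ j, (q j - ∑ i, t i j) ≠ ∞ :=
    hdef ▸ ne_top_of_le_ne_top hfin (Finset.sum_le_sum fun _ _ => tsub_le_self)
  simp only [completePlan]
  rw [Finset.sum_add_distrib, hdef]
  simp_rw [mul_comm (p _ - _)]
  rw [sum_mul_div_sum_of_sum_eq hdef.symm hfin' j, add_tsub_cancel_of_le (hcol j)]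

lemma sum_roundPlan_left (hpq : ∑ i, p i = ∑ j, q j) (hfin : ∑ i, p i ≠ ∞)
    (g : ι → ι → ℝ≥0∞) (i : ι) : ∑ j, roundPlan p q g i j = p i :=
  sum_completePlan_left (sum_truncatePlan_le_left g) (sum_truncatePlan_le_right g) hpq hfin i

lemma sum_roundPlan_right (hpq : ∑ i, p i = ∑ j, q j) (hfin : ∑ i, p i ≠ ∞)
    (g : ι → ι → ℝ≥0∞) (j : ι) : ∑ i, roundPlan p q g i j = q j :=
  sum_completePlan_right (sum_truncatePlan_le_left g) (sum_truncatePlan_le_right g) hpq hfin j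

lemma sum_roundPlan (hpq : ∑ i, p i = ∑ j, q j) (hfin : ∑ i, p i ≠ ∞) (g : ι → ι → ℝ≥0∞) :
    ∑ k : ι × ι, roundPlan p q g k.1 k.2 = ∑ i, p i := by
  rw [Fintype.sum_prod_type']
  exact Finset.sum_congr rfl fun i _ => sum_roundPlan_left hpq hfin g i

lemma le_roundPlan (hp : ∀ i, p i ≠ ∞) (hq : ∀ j, q j ≠ ∞) {g : ι → ι → ℝ≥0∞}
    (hrow : ∀ i, ∑ j, g i j ≤ p i) (hcol : ∀ j, ∑ i, g i j ≤ q j) (i j : ι) :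
    g i j ≤ roundPlan p q g i j := by
  rw [roundPlan, truncatePlan_eq_self hp hq hrow hcol]
  exact le_self_add

lemma measurable_roundPlan {Ω : Type*} [MeasurableSpace Ω] {p q : Ω → ι → ℝ≥0∞}
    (hp : ∀ i, Measurable fun ω => p ω i) (hq : ∀ j, Measurable fun ω => q ω j)
    (g : ι → ι → ℝ≥0∞) (i j : ι) : Measurable fun ω => roundPlan (p ω) (q ω) g i j := by
  simp only [roundPlan, completePlan, truncatePlan]
  fun_prop

end PlanRounding

section Approximation

variable {ι E : Type*} [Fintype ι] [MeasurableSpace E] {B : ι → Set E}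

lemma sum_mul_le_sum_mul_add_mul_tsub {κ : Type*} [Fintype κ] {g h w : κ → ℝ≥0∞} {W : ℝ≥0∞}
    (hgh : ∀ k, g k ≤ h k) (hw : ∀ k, w k ≤ W) (hg : ∑ k, g k ≠ ∞) :
    ∑ k, h k * w k ≤ ∑ k, g k * w k + W * (∑ k, h k - ∑ k, g k) := by
  rw [← ENNReal.sum_tsub_of_le hgh hg, Finset.mul_sum, ← Finset.sum_add_distrib]
  refine Finset.sum_le_sum fun k _ => ?_
  calc h k * w k = g k * w k + (h k - g k) * w k := by
        rw [← add_mul, add_tsub_cancel_of_le (hgh k)]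
    _ ≤ g k * w k + W * (h k - g k) := by
        rw [mul_comm (h k - g k)]
        gcongr
        exact hw k

lemma sum_mul_measure_le_lintegral_add {κ X : Type*} [Fintype κ] [MeasurableSpace X]
    {C : κ → Set X} (hC : IsMeasurablePartition C) {f : X → ℝ≥0∞} (hf : Measurable f)
    {η : ℝ≥0∞} {w : κ → ℝ≥0∞} (hw : ∀ k, ∀ x ∈ C k, w k ≤ f x + η) (ρ : Measure X)
    [IsProbabilityMeasure ρ] :
    ∑ k, w k * ρ (C k) ≤ ∫⁻ x, f x ∂ρ + η :=
  calc ∑ k, w k * ρ (C k) = ∑ k, ∫⁻ _ in C k, w k ∂ρ := by simp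
    _ ≤ ∑ k, ∫⁻ x in C k, (f x + η) ∂ρ :=
        Finset.sum_le_sum fun k _ => setLIntegral_mono (hf.add_const η) (hw k)
    _ = ∫⁻ x, (f x + η) ∂ρ := hC.sum_setLIntegral ρ _
    _ = ∫⁻ x, f x ∂ρ + η := by
        rw [lintegral_add_right _ measurable_const, lintegral_const, measure_univ, mul_one]

lemma IsCoupling.sum_measure_prod_left (hB : IsMeasurablePartition B) {π : Measure (E × E)}
    {μ ν : Measure E} (hπ : IsCoupling π μ ν) (i : ι) : ∑ j, π (B i ×ˢ B j) = μ (B i) := by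
  simp_rw [prod_eq]
  rw [(hB.preimage measurable_snd).sum_measure_inter π (measurable_fst (hB.measurableSet i)),
    ← Measure.map_apply measurable_fst (hB.measurableSet i), hπ.map_fst]

lemma IsCoupling.sum_measure_prod_right (hB : IsMeasurablePartition B) {π : Measure (E × E)}
    {μ ν : Measure E} (hπ : IsCoupling π μ ν) (j : ι) : ∑ i, π (B i ×ˢ B j) = ν (B j) := by
  simp_rw [prod_eq, inter_comm (Prod.fst ⁻¹' _)]
  rw [(hB.preimage measurable_fst).sum_measure_inter π (measurable_snd (hB.measurableSet j)),
    ← Measure.map_apply measurable_snd (hB.measurableSet j), hπ.map_snd]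

theorem lintegral_blockCoupling_roundPlan_le (hB : IsMeasurablePartition B)
    {f : E × E → ℝ≥0∞} (hf : Measurable f) {η W : ℝ≥0∞}
    (hosc : ∀ i j, ∀ z ∈ B i ×ˢ B j, ∀ z' ∈ B i ×ˢ B j, f z ≤ f z' + η) (hfW : ∀ z, f z ≤ W)
    {μ ν : Measure E} [IsProbabilityMeasure μ] [IsProbabilityMeasure ν] {π : Measure (E × E)}
    (hπ : IsCoupling π μ ν) {g : ι → ι → ℝ≥0∞} (hg : ∀ i j, g i j ≤ π (B i ×ˢ B j)) :
    ∫⁻ z, f z ∂blockCoupling B (roundPlan (fun i => μ (B i)) (fun j => ν (B j)) g) μ ν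
      ≤ ∫⁻ z, f z ∂π + η + W * (1 - ∑ k : ι × ι, g k.1 k.2) := by
  have := hπ.isProbabilityMeasure
  set h := roundPlan (fun i => μ (B i)) (fun j => ν (B j)) g
  have hgh : ∀ i j, g i j ≤ h i j := le_roundPlan (fun _ => measure_ne_top _ _)
    (fun _ => measure_ne_top _ _)
    (fun i => (Finset.sum_le_sum fun j _ => hg i j).trans_eq (hπ.sum_measure_prod_left hB i))
    (fun j => (Finset.sum_le_sum fun i _ => hg i j).trans_eq (hπ.sum_measure_prod_right hB j))
  have hh_sum : ∑ k : ι × ι, h k.1 k.2 = 1 := by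
    rw [sum_roundPlan (by simp [hB.sum_measure]) (by simp [hB.sum_measure]), hB.sum_measure,
      measure_univ]
  set w : ι → ι → ℝ≥0∞ := fun i j => ⨆ z ∈ B i ×ˢ B j, f z
  have hfw : ∀ i j, ∀ z ∈ B i ×ˢ B j, f z ≤ w i j := fun i j z hz =>
    le_iSup₂ (f := fun z _ => f z) z hz
  have hwf : ∀ i j, ∀ z' ∈ B i ×ˢ B j, w i j ≤ f z' + η := fun i j z' hz' =>
    iSup₂_le fun z hz => hosc i j z hz z' hz'
  have hg_fin : ∑ k : ι × ι, g k.1 k.2 ≠ ∞ :=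
    ne_top_of_le_ne_top (hh_sum ▸ ENNReal.one_ne_top) (Finset.sum_le_sum fun k _ => hgh k.1 k.2)
  -- `h` dominates `g` and has mass one, so it moves only `1 - ∑ g` beyond `g`, at unit cost `≤ W`;
  -- on each cell the cost is within `η` of its supremum `w`.
  calc ∫⁻ z, f z ∂blockCoupling B h μ ν ≤ ∑ k : ι × ι, h k.1 k.2 * w k.1 k.2 :=
        lintegral_blockCoupling_le hB.measurableSet h μ ν hfw
    _ ≤ ∑ k : ι × ι, g k.1 k.2 * w k.1 k.2 + W * (1 - ∑ k : ι × ι, g k.1 k.2) := by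
        rw [← hh_sum]
        exact sum_mul_le_sum_mul_add_mul_tsub (fun k => hgh k.1 k.2)
          (fun k => iSup₂_le fun z _ => hfW z) hg_fin
    _ ≤ ∑ k : ι × ι, w k.1 k.2 * π (B k.1 ×ˢ B k.2) + W * (1 - ∑ k : ι × ι, g k.1 k.2) := by
        gcongr ?_ + _
        exact Finset.sum_le_sum fun k _ =>
          (mul_comm _ _).trans_le (by gcongr; exact hg k.1 k.2)
    _ ≤ ∫⁻ z, f z ∂π + η + W * (1 - ∑ k : ι × ι, g k.1 k.2) := by
        gcongr
        exact sum_mul_measure_le_lintegral_add (hB.prod hB) hf (fun k => hwf k.1 k.2) π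

lemma exists_rat_le_sum_le_add {κ : Type*} [Fintype κ] {β : κ → ℝ≥0∞} (hβ : ∀ k, β k ≠ ∞)
    {δ : ℝ≥0∞} (hδ : δ ≠ 0) :
    ∃ γ : κ → ℚ, (∀ k, ENNReal.ofReal (γ k) ≤ β k) ∧
      ∑ k, β k ≤ ∑ k, ENNReal.ofReal (γ k) + δ := by
  obtain ⟨ε, hε, hεδ⟩ := ENNReal.exists_pos_sum_of_countable hδ κ
  have : ∀ k, ∃ r : ℚ, ENNReal.ofReal r ≤ β k ∧ β k ≤ ENNReal.ofReal r + ε k := fun k => by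
    obtain ⟨r, h₁, h₂⟩ := exists_rat_btwn (sub_lt_self (β k).toReal (NNReal.coe_pos.mpr (hε k)))
    refine ⟨r, ?_, ?_⟩
    · rw [← ENNReal.ofReal_toReal (hβ k)]
      exact ENNReal.ofReal_le_ofReal h₂.le
    · rw [← ENNReal.ofReal_toReal (hβ k), ← ENNReal.ofReal_coe_nnreal]
      exact (ENNReal.ofReal_le_ofReal (by linarith)).trans ENNReal.ofReal_add_le
  choose γ hγβ hβγ using this
  refine ⟨γ, hγβ, ?_⟩
  calc ∑ k, β k ≤ ∑ k, (ENNReal.ofReal (γ k) + ε k) := Finset.sum_le_sum fun k _ => hβγ k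
    _ = ∑ k, ENNReal.ofReal (γ k) + ∑ k, (ε k : ℝ≥0∞) := Finset.sum_add_distrib
    _ ≤ ∑ k, ENNReal.ofReal (γ k) + δ := by
        gcongr
        exact (ENNReal.sum_le_tsum _).trans hεδ.le

lemma exists_rat_plan_lintegral_blockCoupling_le (hB : IsMeasurablePartition B)
    {f : E × E → ℝ≥0∞} (hf : Measurable f) {η W : ℝ≥0∞}
    (hosc : ∀ i j, ∀ z ∈ B i ×ˢ B j, ∀ z' ∈ B i ×ˢ B j, f z ≤ f z' + η) (hfW : ∀ z, f z ≤ W)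
    (hW : W ≠ ∞) {μ ν : Measure E} [IsProbabilityMeasure μ] [IsProbabilityMeasure ν]
    {π : Measure (E × E)} (hπ : IsCoupling π μ ν) {δ : ℝ≥0∞} (hδ : δ ≠ 0) :
    ∃ γ : ι → ι → ℚ, ∫⁻ z, f z ∂blockCoupling B (roundPlan (fun i => μ (B i))
      (fun j => ν (B j)) fun i j => ENNReal.ofReal (γ i j)) μ ν ≤ ∫⁻ z, f z ∂π + η + δ := by
  have := hπ.isProbabilityMeasure
  obtain ⟨δ', hδ', hδ'W⟩ := ENNReal.exists_pos_mul_lt hW hδ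
  obtain ⟨γ, hγ, hγ_sum⟩ := exists_rat_le_sum_le_add
    (β := fun k : ι × ι => π (B k.1 ×ˢ B k.2)) (fun _ => measure_ne_top _ _) hδ'.ne'
  have hdefect : 1 - ∑ k, ENNReal.ofReal (γ k) ≤ δ' := by
    rw [tsub_le_iff_left, ← measure_univ (μ := π), ← (hB.prod hB).sum_measure]
    exact hγ_sum
  refine ⟨fun i j => γ (i, j), (lintegral_blockCoupling_roundPlan_le hB hf hosc hfW hπ
    fun i j => hγ (i, j)).trans ?_⟩
  gcongr
  calc W * (1 - ∑ k, ENNReal.ofReal (γ k)) ≤ δ' * W := by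
        rw [mul_comm]
        gcongr
    _ ≤ δ := hδ'W.le

end Approximation

section Compact

variable {E : Type*} [MetricSpace E] [CompactSpace E] [MeasurableSpace E] [OpensMeasurableSpace E]

lemma exists_isMeasurablePartition_dist_lt {δ : ℝ} (hδ : 0 < δ) :
    ∃ (m : ℕ) (B : Fin m → Set E), IsMeasurablePartition B ∧
      ∀ i, ∀ x ∈ B i, ∀ y ∈ B i, dist x y < δ := by
  obtain ⟨t, -, htf, hcover⟩ :=
    finite_cover_balls_of_compact (isCompact_univ (X := E)) (half_pos hδ)
  obtain ⟨m, e, rfl⟩ := htf.fin_embedding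
  refine ⟨m, disjointed fun i => Metric.ball (e i) (δ / 2),
    ⟨fun i => disjointedRec (fun _ _ ht => ht.diff Metric.isOpen_ball.measurableSet)
      Metric.isOpen_ball.measurableSet, disjoint_disjointed _, ?_⟩, fun i x hx y hy => ?_⟩
  · rw [iUnion_disjointed, ← univ_subset_iff]
    simpa using hcover
  · calc dist x y ≤ dist x (e i) + dist y (e i) := dist_triangle_right _ _ _
      _ < δ / 2 + δ / 2 := add_lt_add (disjointed_subset _ i hx) (disjointed_subset _ i hy)
      _ = δ := add_halves δ

lemma exists_isMeasurablePartition_ofReal_le_add {f : E × E → ℝ} (hf : Continuous f) {η : ℝ≥0∞}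
    (hη : η ≠ 0) :
    ∃ (m : ℕ) (B : Fin m → Set E), IsMeasurablePartition B ∧ ∀ i j, ∀ z ∈ B i ×ˢ B j,
      ∀ z' ∈ B i ×ˢ B j, ENNReal.ofReal (f z) ≤ ENNReal.ofReal (f z') + η := by
  obtain ⟨r, -, hr, hrη⟩ := ENNReal.lt_iff_exists_real_btwn.mp (pos_iff_ne_zero.2 hη)
  obtain ⟨δ, hδ, hfδ⟩ := Metric.uniformContinuous_iff.mp
    (CompactSpace.uniformContinuous_of_continuous hf) r (ENNReal.ofReal_pos.mp hr)
  obtain ⟨m, B, hB, hdist⟩ := exists_isMeasurablePartition_dist_lt (E := E) hδ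
  refine ⟨m, B, hB, fun i j z hz z' hz' => ?_⟩
  have hzz : dist z z' < δ := by
    rw [Prod.dist_eq]
    exact max_lt (hdist i _ hz.1 _ hz'.1) (hdist j _ hz.2 _ hz'.2)
  have hfz : f z ≤ f z' + r := by
    have := hfδ hzz
    rw [Real.dist_eq] at this
    linarith [(abs_sub_lt_iff.mp this).1]
  calc ENNReal.ofReal (f z) ≤ ENNReal.ofReal (f z' + r) := ENNReal.ofReal_le_ofReal hfz
    _ ≤ ENNReal.ofReal (f z') + ENNReal.ofReal r := ENNReal.ofReal_add_le
    _ ≤ ENNReal.ofReal (f z') + η := by gcongr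

theorem exists_couplings_iInf_transportCost_le {Ω : Type*} [MeasurableSpace Ω] {c : E → E → ℝ}
    (hc : Continuous fun z : E × E => c z.1 z.2) {q₁ q₂ : Ω → Measure E} (hq₁ : Measurable q₁)
    (hq₂ : Measurable q₂) [∀ ω, IsProbabilityMeasure (q₁ ω)] [∀ ω, IsProbabilityMeasure (q₂ ω)] :
    ∃ G : ℕ → Ω → Measure (E × E), (∀ n, Measurable (G n)) ∧
      (∀ n ω, IsCoupling (G n ω) (q₁ ω) (q₂ ω)) ∧
      ∀ ω π, IsCoupling π (q₁ ω) (q₂ ω) → ⨅ n, transportCost c (G n ω) ≤ transportCost c π := by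
  obtain ⟨D, hD⟩ := (isCompact_range hc).bddAbove
  have hcD : ∀ z : E × E, ENNReal.ofReal (c z.1 z.2) ≤ ENNReal.ofReal D := fun z =>
    ENNReal.ofReal_le_ofReal (hD ⟨z, rfl⟩)
  choose M B hB hBosc using fun n : ℕ =>
    exists_isMeasurablePartition_ofReal_le_add hc (ENNReal.inv_ne_zero.2 (ENNReal.natCast_ne_top n))
  obtain ⟨e, he⟩ := exists_surjective_nat ((n : ℕ) × (Fin (M n) → Fin (M n) → ℚ))
  refine ⟨fun N ω => blockCoupling (B (e N).1)
      (roundPlan (fun i => q₁ ω (B (e N).1 i)) (fun j => q₂ ω (B (e N).1 j))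
        fun i j => ENNReal.ofReal ((e N).2 i j)) (q₁ ω) (q₂ ω),
    fun N => ?_, fun N ω => ?_, fun ω π hπ => ?_⟩
  · exact measurable_blockCoupling (hB _).measurableSet (measurable_roundPlan
      (fun i => (Measure.measurable_coe ((hB _).measurableSet i)).comp hq₁)
      (fun j => (Measure.measurable_coe ((hB _).measurableSet j)).comp hq₂) _) hq₁ hq₂
  · have hpq : ∑ i, q₁ ω (B (e N).1 i) = ∑ j, q₂ ω (B (e N).1 j) := by
      simp [(hB _).sum_measure]
    exact isCoupling_blockCoupling (hB _) (sum_roundPlan_left hpq (by simp [(hB _).sum_measure]) _)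
      (sum_roundPlan_right hpq (by simp [(hB _).sum_measure]) _)
  refine ENNReal.le_of_forall_pos_le_add fun ε hε _ => ?_
  have hε2 : (ε / 2 : ℝ≥0∞) ≠ 0 := by simpa using hε.ne'
  obtain ⟨n, hn⟩ := ENNReal.exists_inv_nat_lt hε2
  obtain ⟨γ, hγ⟩ := exists_rat_plan_lintegral_blockCoupling_le (hB n) (by fun_prop) (hBosc n) hcD
    ENNReal.ofReal_ne_top hπ hε2
  obtain ⟨N, hN⟩ := he ⟨n, γ⟩
  calc ⨅ N, transportCost c (_ : Measure (E × E)) ≤ transportCost c _ := iInf_le _ N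
    _ ≤ transportCost c π + (n : ℝ≥0∞)⁻¹ + ε / 2 := by
        beta_reduce
        rw [hN]
        exact hγ
    _ ≤ transportCost c π + ε / 2 + ε / 2 := by gcongr
    _ = transportCost c π + ε := by rw [add_assoc, ENNReal.add_halves]

end Compact

section Mixture

variable {E Ω : Type*} [MeasurableSpace E] [MeasurableSpace Ω] {c : E → E → ℝ}

lemma exists_measurable_lt_iInf_add {β : Type*} [MeasurableSpace β] {G : ℕ → Ω → β}
    (hG : ∀ n, Measurable (G n)) {F : ℕ → Ω → ℝ≥0∞} (hF : ∀ n, Measurable (F n))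
    (hfin : ∀ ω, ⨅ n, F n ω ≠ ∞) {ε : ℝ≥0∞} (hε : ε ≠ 0) :
    ∃ N : Ω → ℕ, Measurable (fun ω => G (N ω) ω) ∧ ∀ ω, F (N ω) ω < (⨅ n, F n ω) + ε := by
  classical
  have hsel : ∀ ω, ∃ n, F n ω < (⨅ n, F n ω) + ε := fun ω =>
    iInf_lt_iff.mp (ENNReal.lt_add_right (hfin ω) hε)
  exact ⟨fun ω => Nat.find (hsel ω),
    Measurable.find hG (fun n => measurableSet_lt (hF n) ((Measurable.iInf hF).add_const _)) hsel,
    fun ω => Nat.find_spec (hsel ω)⟩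

theorem W2sq_bind_le_integral (hcm : Measurable fun z : E × E => c z.1 z.2)
    (hc : ∀ x y, 0 ≤ c x y) {D : ℝ} (hcD : ∀ x y, c x y ≤ D) (P : Measure Ω)
    [IsProbabilityMeasure P] {q₁ q₂ : Ω → Measure E} (hq₁ : Measurable q₁) (hq₂ : Measurable q₂)
    [∀ ω, IsProbabilityMeasure (q₁ ω)] [∀ ω, IsProbabilityMeasure (q₂ ω)]
    {G : ℕ → Ω → Measure (E × E)} (hG : ∀ n, Measurable (G n))
    (hG_coupling : ∀ n ω, IsCoupling (G n ω) (q₁ ω) (q₂ ω))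
    (hG_inf : ∀ ω π, IsCoupling π (q₁ ω) (q₂ ω) →
      ⨅ n, transportCost c (G n ω) ≤ transportCost c π) :
    W2sq c (P.bind q₁) (P.bind q₂) ≤ ∫ ω, W2sq c (q₁ ω) (q₂ ω) ∂P := by
  set f : Ω → ℝ≥0∞ := fun ω => ⨅ n, transportCost c (G n ω)
  have hcost_meas : ∀ n, Measurable fun ω => transportCost c (G n ω) := fun n =>
    (Measure.measurable_lintegral hcm.ennreal_ofReal).comp (hG n)
  have hf_meas : Measurable f := .iInf hcost_meas
  have hf : ∀ ω, f ω = ENNReal.ofReal (W2sq c (q₁ ω) (q₂ ω)) := fun ω =>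
    (ofReal_W2sq_eq_iInf_of_forall_iInf_le hcm hc hcD (hG_coupling · ω) (hG_inf ω)).symm
  have hfD : ∀ ω, f ω ≤ ENNReal.ofReal D := fun ω =>
    (iInf_le _ 0).trans (transportCost_le_ofReal hcD (hG_coupling 0 ω))
  have hf_lt_top : ∫⁻ ω, f ω ∂P < ∞ :=
    (lintegral_mono hfD).trans_lt (by simp)
  have hRHS : ∫ ω, W2sq c (q₁ ω) (q₂ ω) ∂P = (∫⁻ ω, f ω ∂P).toReal := by
    rw [← integral_toReal hf_meas.aemeasurable
      (.of_forall fun ω => (hfD ω).trans_lt ENNReal.ofReal_lt_top)]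
    exact integral_congr_ae (.of_forall fun ω => by
      simp only [hf, ENNReal.toReal_ofReal (W2sq_nonneg hc)])
  refine le_of_forall_pos_le_add fun ε hε => ?_
  obtain ⟨N, hκ, hN⟩ := exists_measurable_lt_iInf_add hG hcost_meas
    (fun ω => ((hfD ω).trans_lt ENNReal.ofReal_lt_top).ne) (ENNReal.ofReal_pos.mpr hε).ne'
  set κ : Ω → Measure (E × E) := fun ω => G (N ω) ω
  have hκ_coupling : IsCoupling (P.bind κ) (P.bind q₁) (P.bind q₂) :=
    IsCoupling.bind P hq₁ hq₂ hκ fun ω => hG_coupling _ ω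
  calc W2sq c (P.bind q₁) (P.bind q₂) ≤ (transportCost c (P.bind κ)).toReal :=
        integral_eq_toReal_transportCost hcm hc _ ▸ W2sq_le_integral hc hκ_coupling
    _ ≤ (∫⁻ ω, f ω ∂P + ENNReal.ofReal ε).toReal := by
        refine ENNReal.toReal_mono (by finiteness) ?_
        calc transportCost c (P.bind κ) = ∫⁻ ω, transportCost c (κ ω) ∂P :=
              Measure.lintegral_bind hκ.aemeasurable hcm.ennreal_ofReal.aemeasurable
          _ ≤ ∫⁻ ω, (f ω + ENNReal.ofReal ε) ∂P :=
              lintegral_mono fun ω => (hN ω).le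
          _ = ∫⁻ ω, f ω ∂P + ENNReal.ofReal ε := by
              rw [lintegral_add_right _ measurable_const, lintegral_const, measure_univ, mul_one]
    _ = ∫ ω, W2sq c (q₁ ω) (q₂ ω) ∂P + ε := by
        rw [hRHS, ENNReal.toReal_add hf_lt_top.ne ENNReal.ofReal_ne_top,
          ENNReal.toReal_ofReal hε.le]

end Mixture

/-- For measurable `q₁, q₂ : Ω → 𝒫(U)` (`U ⊂ ℝ^l` compact) on a
probability space `(Ω, ℱ, P)`, the mean measures `q̄ᵢ = ∫ qᵢ(ω) P(dω)` satisfy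
`W_{2,U}(q̄₁, q̄₂)² ≤ ∫ W_{2,U}(q₁(ω), q₂(ω))² P(dω)`. -/
theorem stmt5 {l : ℕ} (U : Set (EuclideanSpace ℝ (Fin l))) (hU : IsCompact U)
    {Ω : Type*} [MeasurableSpace Ω] (P : Measure Ω) [IsProbabilityMeasure P]
    (q₁ q₂ : Ω → Measure U) (hq₁ : Measurable q₁) (hq₂ : Measurable q₂)
    (hp₁ : ∀ ω, IsProbabilityMeasure (q₁ ω)) (hp₂ : ∀ ω, IsProbabilityMeasure (q₂ ω)) :
    W2sq (fun (u v : U) => dist u v ^ 2) (P.bind q₁) (P.bind q₂)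
      ≤ ∫ ω, W2sq (fun (u v : U) => dist u v ^ 2) (q₁ ω) (q₂ ω) ∂P := by
  have : CompactSpace U := isCompact_iff_compactSpace.mp hU
  have hc : Continuous fun z : U × U => dist z.1 z.2 ^ 2 := by fun_prop
  obtain ⟨D, hD⟩ := (isCompact_range hc).bddAbove
  obtain ⟨G, hG, hG_coupling, hG_inf⟩ :=
    exists_couplings_iInf_transportCost_le (c := fun u v : U => dist u v ^ 2) hc hq₁ hq₂
  exact W2sq_bind_le_integral hc.measurable (fun _ _ => by positivity)
    (fun x y => hD ⟨(x, y), rfl⟩) P hq₁ hq₂ hG hG_coupling hG_inf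
end

section
/- Let T > 0 and let c : [0,T] × ℝ → ℝ be continuous. For (a,y) ∈ C([0,T];ℝ)² with y(0) ≥ a(0), set x := Γ(a,y) and r := x − y, so that r is continuous, nondecreasing, and r(0) = 0. Then the reflection-cost functional (a,y) ↦ ∫_{[0,T]} c(t, x(t)) dr(t), where the integral is taken with respect to the Lebesgue–Stieltjes measure of r, is continuous on the set {(a,y) ∈ C([0,T];ℝ)² : y(0) ≥ a(0)} with respect to the product of the sup-norm topologies. In particular, if (aₙ,yₙ) → (a,y) uniformly on [0,T] with yₙ(0) ≥ aₙ(0) for all n, then ∫_{[0,T]} c(t, Γ(aₙ,yₙ)(t)) d(Γ(aₙ,yₙ) − yₙ)(t) → ∫_{[0,T]} c(t, Γ(a,y)(t)) d(Γ(a,y) − y)(t). -/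
/-!
The regulator r = Γ(a, y) - y is the running maximum of (a - y)⁺. Taking a running maximum
is 1-Lipschitz for the sup norm, so uniform convergence of the data gives uniform convergence
of the regulators, of the reflected paths and, by uniform continuity of c on compacts, of the
integrands t ↦ c(t, Γ(a, y)(t)). The regulators vanish on (-∞, 0], so their measures have no
atom at 0 and give (s, t] the mass r(t) - r(s). For a fixed partition of [0, T] the
Riemann–Stieltjes sums therefore converge, and since the integrand is uniformly continuous and
the total masses r(T) stay bounded, these sums approximate the integrals uniformly along the
sequence.
-/

open Set MeasureTheory Filter Topology

theorem ContinuousOn.sSup_image_Icc {g : ℝ → ℝ} {a b : ℝ} (hg : ContinuousOn g (Icc a b)) :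
    ContinuousOn (fun t => sSup (g '' Icc a t)) (Icc a b) := by
  rcases lt_or_ge b a with hba | hab
  · simp [Icc_eq_empty_of_lt hba]
  set G := IccExtend hab ((Icc a b).domRestrict g)
  have hG : Continuous G :=
    continuous_IccExtend_iff.2 (continuousOn_iff_continuous_domRestrict.1 hg)
  -- Parametrizing `[a, t]` by the fixed compact `[0, 1]` makes the supremum jointly continuous.
  have hsup : Continuous fun t => sSup (G ∘ AffineMap.lineMap a t '' Icc (0 : ℝ) 1) :=
    isCompact_Icc.continuous_sSup (by fun_prop)
  refine hsup.continuousOn.congr fun t ht => ?_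
  dsimp only
  rw [image_comp G, ← segment_eq_image_lineMap, segment_eq_Icc ht.1]
  exact congrArg sSup <| image_congr fun s hs =>
    (IccExtend_of_mem hab ((Icc a b).domRestrict g) ⟨hs.1, hs.2.trans ht.2⟩).symm

theorem abs_sSup_image_sub_sSup_image_le {α : Type*} {f g : α → ℝ} {s : Set α}
    (hs : s.Nonempty) (hf : BddAbove (f '' s)) (hg : BddAbove (g '' s)) {ε : ℝ}
    (h : ∀ x ∈ s, |f x - g x| ≤ ε) :
    |sSup (f '' s) - sSup (g '' s)| ≤ ε := by
  have key : ∀ {f g : α → ℝ}, BddAbove (g '' s) → (∀ x ∈ s, f x - g x ≤ ε) →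
      sSup (f '' s) - sSup (g '' s) ≤ ε := fun hg h =>
    sub_le_iff_le_add'.2 <| csSup_le (hs.image _) <| forall_mem_image.2 fun x hx =>
      (sub_le_iff_le_add'.1 (h x hx)).trans
        (by gcongr; exact le_csSup hg (mem_image_of_mem _ hx))
  exact abs_sub_le_iff.2 ⟨key hg fun x hx => (abs_le.1 (h x hx)).2,
    key hf fun x hx => (abs_sub_le_iff.1 (h x hx)).2⟩

theorem TendstoUniformlyOn.sSup_image_Icc {ι : Type*} {l : Filter ι} {f : ι → ℝ → ℝ}
    {g : ℝ → ℝ} {a b : ℝ} (hf : ∀ i, ContinuousOn (f i) (Icc a b))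
    (hg : ContinuousOn g (Icc a b)) (h : TendstoUniformlyOn f g l (Icc a b)) :
    TendstoUniformlyOn (fun i t => sSup (f i '' Icc a t)) (fun t => sSup (g '' Icc a t)) l
      (Icc a b) := by
  rw [Metric.tendstoUniformlyOn_iff] at h ⊢
  intro ε hε
  filter_upwards [h (ε / 2) (half_pos hε)] with i hi t ht
  have hsub : Icc a t ⊆ Icc a b := Icc_subset_Icc_right ht.2
  have bdd : ∀ {u : ℝ → ℝ}, ContinuousOn u (Icc a b) → BddAbove (u '' Icc a t) :=
    fun hu => (isCompact_Icc.image_of_continuousOn (hu.mono hsub)).bddAbove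
  refine (abs_sSup_image_sub_sSup_image_le (nonempty_Icc.2 ht.1) (bdd hg) (bdd (hf i))
    fun s hs => ?_).trans_lt (half_lt_self hε)
  exact (hi s (hsub hs)).le

theorem ContinuousOn.tendstoUniformlyOn_comp {α β ι : Type*} [PseudoMetricSpace α]
    [PseudoMetricSpace β] {l : Filter ι} {K : Set α} (hK : IsCompact K) {c : α → ℝ → β}
    (hc : ContinuousOn (Function.uncurry c) (K ×ˢ univ)) {u : ι → α → ℝ} {U : α → ℝ}
    (hU : ContinuousOn U K) (hu : TendstoUniformlyOn u U l K) :
    TendstoUniformlyOn (fun i t => c t (u i t)) (fun t => c t (U t)) l K := by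
  obtain ⟨R, hR⟩ := hK.exists_bound_of_continuousOn hU
  have hcK : UniformContinuousOn (Function.uncurry c) (K ×ˢ Metric.closedBall 0 (R + 1)) :=
    (hK.prod (isCompact_closedBall 0 (R + 1))).uniformContinuousOn_of_continuous
      (hc.mono (prod_mono_right (subset_univ _)))
  rw [Metric.tendstoUniformlyOn_iff] at hu ⊢
  intro ε hε
  obtain ⟨δ, hδ, hcδ⟩ := Metric.uniformContinuousOn_iff.1 hcK ε hε
  filter_upwards [hu (min δ 1) (lt_min hδ one_pos)] with i hi t ht
  have hclose := hi t ht
  have hUt : ‖U t‖ ≤ R + 1 := (hR t ht).trans (le_add_of_nonneg_right zero_le_one)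
  have hut : ‖u i t‖ ≤ R + 1 := by
    have := norm_le_norm_add_norm_sub' (u i t) (U t)
    rw [← dist_eq_norm'] at this
    linarith [hR t ht, hclose.trans_le (min_le_right δ 1)]
  refine hcδ (t, U t) ⟨ht, mem_closedBall_zero_iff.2 hUt⟩ (t, u i t)
    ⟨ht, mem_closedBall_zero_iff.2 hut⟩ ?_
  rw [Prod.dist_eq, dist_self, max_eq_right dist_nonneg]
  exact hclose.trans_le (min_le_left δ 1)

theorem tendsto_of_forall_approx {ι X : Type*} [PseudoMetricSpace X] {l : Filter ι}
    {u : ι → X} {x : X} (h : ∀ ε > 0, ∃ (w : ι → X) (z : X), Tendsto w l (𝓝 z) ∧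
      (∀ᶠ i in l, dist (u i) (w i) ≤ ε) ∧ dist x z ≤ ε) :
    Tendsto u l (𝓝 x) := by
  rw [Metric.tendsto_nhds]
  intro ε hε
  obtain ⟨w, z, hwz, huw, hxz⟩ := h (ε / 3) (by positivity)
  filter_upwards [huw, Metric.tendsto_nhds.1 hwz (ε / 3) (by positivity)] with i hi hwi
  linarith [dist_triangle4 (u i) (w i) z x, dist_comm z x]

theorem ContinuousOn.exists_partition_Icc {F : ℝ → ℝ} {a b : ℝ} (hab : a ≤ b)
    (hF : ContinuousOn F (Icc a b)) {ε : ℝ} (hε : 0 < ε) :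
    ∃ (N : ℕ) (p : ℕ → ℝ), Monotone p ∧ p 0 = a ∧ p N = b ∧
      ∀ i < N, ∀ t ∈ Icc (p i) (p (i + 1)), |F t - F (p (i + 1))| ≤ ε := by
  obtain ⟨δ, hδ, hFδ⟩ :=
    Metric.uniformContinuousOn_iff_le.1 (isCompact_Icc.uniformContinuousOn_of_continuous hF) ε hε
  obtain ⟨N, hN⟩ := exists_nat_gt ((b - a) / δ)
  have hN0 : (0 : ℝ) < N := (div_nonneg (sub_nonneg.2 hab) hδ.le).trans_lt hN
  set h := (b - a) / N
  have hh : 0 ≤ h := div_nonneg (sub_nonneg.2 hab) hN0.le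
  have hhδ : h ≤ δ := (div_le_iff₀ hN0).2 (by rw [div_lt_iff₀ hδ] at hN; linarith)
  set p : ℕ → ℝ := fun i => a + i * h
  have hp : Monotone p := fun i j hij => by simp only [p]; gcongr
  have hp0 : p 0 = a := by simp [p]
  have hpN : p N = b := by simp only [p, h]; field_simp; ring
  refine ⟨N, p, hp, hp0, hpN, fun i hi t ht => ?_⟩
  have hIcc : ∀ s ∈ Icc (p i) (p (i + 1)), s ∈ Icc a b := fun s hs =>
    ⟨(hp0.ge.trans (hp i.zero_le)).trans hs.1, hs.2.trans ((hp hi).trans hpN.le)⟩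
  refine hFδ t (hIcc t ht) _ (hIcc _ ⟨hp i.le_succ, le_rfl⟩) ?_
  rw [Real.dist_eq, abs_sub_comm, abs_of_nonneg (sub_nonneg.2 ht.2)]
  have : p (i + 1) = p i + h := by simp only [p]; push_cast; ring
  linarith [ht.1]

namespace StieltjesFunction

variable (S : StieltjesFunction ℝ)

theorem measureReal_Ioc {a b : ℝ} (hab : a ≤ b) : S.measure.real (Ioc a b) = S b - S a := by
  rw [measureReal_def, S.measure_Ioc, ENNReal.toReal_ofReal (sub_nonneg.2 (S.mono hab))]

theorem measure_singleton_eq_zero_of_eq {a x : ℝ} (hx : x < a) (h : S x = S a) :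
    S.measure {a} = 0 :=
  measure_mono_null (singleton_subset_iff.2 (right_mem_Ioc.2 hx)) (by
    rw [S.measure_Ioc, h, sub_self, ENNReal.ofReal_zero])

theorem norm_setIntegral_Ioc_le {E : Type*} [NormedAddCommGroup E] [NormedSpace ℝ E]
    {a b C : ℝ} (hab : a ≤ b) {g : ℝ → E} (hg : ∀ t ∈ Ioc a b, ‖g t‖ ≤ C) :
    ‖∫ t in Ioc a b, g t ∂S.measure‖ ≤ C * (S b - S a) := by
  rw [← S.measureReal_Ioc hab]
  exact norm_setIntegral_le_of_norm_le_const
    (by rw [S.measure_Ioc]; exact ENNReal.ofReal_lt_top) hg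

theorem abs_setIntegral_Ioc_sub_sum_le {F : ℝ → ℝ} {p : ℕ → ℝ} {N : ℕ}
    (hp : Monotone p) (hF : IntegrableOn F (Ioc (p 0) (p N)) S.measure) {ε : ℝ}
    (hε : ∀ i < N, ∀ t ∈ Ioc (p i) (p (i + 1)), |F t - F (p (i + 1))| ≤ ε) :
    |∫ t in Ioc (p 0) (p N), F t ∂S.measure -
        ∑ i ∈ Finset.range N, F (p (i + 1)) * (S (p (i + 1)) - S (p i))| ≤
      ε * (S (p N) - S (p 0)) := by
  have hpi : ∀ i, p i ≤ p (i + 1) := fun i => hp i.le_succ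
  have hFi : ∀ i < N, IntegrableOn F (Ioc (p i) (p (i + 1))) S.measure := fun i hi =>
    hF.mono_set (Ioc_subset_Ioc (hp i.zero_le) (hp hi))
  rw [← intervalIntegral.integral_of_le (hp N.zero_le),
    ← intervalIntegral.sum_integral_adjacent_intervals fun i hi =>
      (intervalIntegrable_iff_integrableOn_Ioc_of_le (hpi i)).2 (hFi i hi),
    ← Finset.sum_range_sub (fun i => S (p i)) N, Finset.mul_sum, ← Finset.sum_sub_distrib]
  refine (Finset.abs_sum_le_sum_abs _ _).trans (Finset.sum_le_sum fun i hi => ?_)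
  have hi := Finset.mem_range.1 hi
  calc |(∫ t in p i..p (i + 1), F t ∂S.measure) - F (p (i + 1)) * (S (p (i + 1)) - S (p i))|
      = ‖∫ t in Ioc (p i) (p (i + 1)), (F t - F (p (i + 1))) ∂S.measure‖ := by
        rw [intervalIntegral.integral_of_le (hpi i), integral_sub (hFi i hi) (integrableOn_const
          (by rw [S.measure_Ioc]; exact ENNReal.ofReal_ne_top)), setIntegral_const,
          S.measureReal_Ioc (hpi i), smul_eq_mul, mul_comm, Real.norm_eq_abs]
    _ ≤ ε * (S (p (i + 1)) - S (p i)) := S.norm_setIntegral_Ioc_le (hpi i) (hε i hi)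

end StieltjesFunction

theorem tendsto_setIntegral_Ioc_stieltjes {ι : Type*} {l : Filter ι}
    {S : ι → StieltjesFunction ℝ} {S' : StieltjesFunction ℝ} {a b : ℝ} (hab : a ≤ b)
    (hS : ∀ t ∈ Icc a b, Tendsto (fun i => S i t) l (𝓝 (S' t)))
    {F : ℝ → ℝ} (hF : ContinuousOn F (Icc a b)) :
    Tendsto (fun i => ∫ t in Ioc a b, F t ∂(S i).measure) l
      (𝓝 (∫ t in Ioc a b, F t ∂S'.measure)) := by
  refine tendsto_of_forall_approx fun ε hε => ?_
  set m := S' b - S' a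
  have hm : 0 ≤ m := sub_nonneg.2 (S'.mono hab)
  have hmass : ∀ᶠ i in l, S i b - S i a ≤ m + 1 :=
    ((hS b (right_mem_Icc.2 hab)).sub (hS a (left_mem_Icc.2 hab))).eventually
      (eventually_le_nhds (lt_add_one m))
  obtain ⟨N, p, hp, rfl, rfl, hpF⟩ :=
    hF.exists_partition_Icc hab (ε := ε / (m + 1)) (by positivity)
  have hpF' : ∀ i < N, ∀ t ∈ Ioc (p i) (p (i + 1)), |F t - F (p (i + 1))| ≤ ε / (m + 1) :=
    fun i hi t ht => hpF i hi t (Ioc_subset_Icc_self ht)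
  have hFi : ∀ μ : Measure ℝ, [IsLocallyFiniteMeasure μ] →
      IntegrableOn F (Ioc (p 0) (p N)) μ :=
    fun μ _ => (hF.integrableOn_compact isCompact_Icc).mono_set Ioc_subset_Icc_self
  refine ⟨fun i => ∑ k ∈ Finset.range N, F (p (k + 1)) * (S i (p (k + 1)) - S i (p k)),
    ∑ k ∈ Finset.range N, F (p (k + 1)) * (S' (p (k + 1)) - S' (p k)), ?_, ?_, ?_⟩
  · have hpmem : ∀ k ≤ N, p k ∈ Icc (p 0) (p N) := fun k hk => ⟨hp k.zero_le, hp hk⟩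
    exact tendsto_finsetSum _ fun k hk => ((hS _ (hpmem _ (Finset.mem_range.1 hk))).sub
      (hS _ (hpmem _ (Finset.mem_range.1 hk).le))).const_mul _
  · filter_upwards [hmass] with i hi
    calc _ ≤ ε / (m + 1) * (S i (p N) - S i (p 0)) :=
          (S i).abs_setIntegral_Ioc_sub_sum_le hp (hFi _) hpF'
      _ ≤ ε / (m + 1) * (m + 1) := by gcongr
      _ = ε := by field_simp
  · calc _ ≤ ε / (m + 1) * m := S'.abs_setIntegral_Ioc_sub_sum_le hp (hFi _) hpF'
      _ ≤ ε / (m + 1) * (m + 1) := by gcongr; linarith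
      _ = ε := by field_simp

theorem tendsto_setIntegral_Ioc_stieltjes_of_tendstoUniformlyOn {ι : Type*} {l : Filter ι}
    {S : ι → StieltjesFunction ℝ} {S' : StieltjesFunction ℝ} {a b : ℝ} (hab : a ≤ b)
    (hS : ∀ t ∈ Icc a b, Tendsto (fun i => S i t) l (𝓝 (S' t)))
    {f : ι → ℝ → ℝ} {F : ℝ → ℝ} (hf : ∀ i, ContinuousOn (f i) (Icc a b))
    (hF : ContinuousOn F (Icc a b)) (hfF : TendstoUniformlyOn f F l (Icc a b)) :
    Tendsto (fun i => ∫ t in Ioc a b, f i t ∂(S i).measure) l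
      (𝓝 (∫ t in Ioc a b, F t ∂S'.measure)) := by
  refine tendsto_of_forall_approx fun ε hε =>
    ⟨_, _, tendsto_setIntegral_Ioc_stieltjes hab hS hF, ?_, (dist_self _).le.trans hε.le⟩
  set m := S' b - S' a
  have hm : 0 ≤ m := sub_nonneg.2 (S'.mono hab)
  have hmass : ∀ᶠ i in l, S i b - S i a ≤ m + 1 :=
    ((hS b (right_mem_Icc.2 hab)).sub (hS a (left_mem_Icc.2 hab))).eventually
      (eventually_le_nhds (lt_add_one m))
  filter_upwards [hmass, Metric.tendstoUniformlyOn_iff.1 hfF (ε / (m + 1)) (by positivity)]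
    with i hmass hfi
  have hint : ∀ {g : ℝ → ℝ}, ContinuousOn g (Icc a b) →
      IntegrableOn g (Ioc a b) (S i).measure :=
    fun hg => (hg.integrableOn_compact isCompact_Icc).mono_set Ioc_subset_Icc_self
  rw [dist_eq_norm, ← integral_sub (hint (hf i)) (hint hF)]
  calc _ ≤ ε / (m + 1) * (S i b - S i a) := (S i).norm_setIntegral_Ioc_le hab fun t ht => by
        rw [← dist_eq_norm, dist_comm]; exact (hfi t (Ioc_subset_Icc_self ht)).le
    _ ≤ ε / (m + 1) * (m + 1) := by gcongr
    _ = ε := by field_simp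

/-- Continuity (in sequential form, for the product sup-norm topology)
of the reflection-cost functional
`(a, y) ↦ ∫_{[0,T]} c(t, Γ(a,y)(t)) d(Γ(a,y) - y)(t)`
on `{(a, y) : y 0 ≥ a 0}`, where `Γ(a,y)(t) = y t + sup_{s ∈ [0,t]} max (a s - y s) 0` is
the dynamic Skorokhod map and the integral is with respect to the Lebesgue–Stieltjes
measure of the regulator `r = Γ(a,y) - y` (encoded by any Stieltjes function agreeing
with the clamped extension of `r`). -/
theorem stmt11 (T : ℝ) (hT : 0 < T) (c : ℝ → ℝ → ℝ)
    (hc : ContinuousOn (Function.uncurry c) (Set.Icc (0:ℝ) T ×ˢ (Set.univ : Set ℝ)))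
    (a y : ℕ → ℝ → ℝ) (A Y : ℝ → ℝ)
    (ha : ∀ n, ContinuousOn (a n) (Set.Icc 0 T))
    (hy : ∀ n, ContinuousOn (y n) (Set.Icc 0 T))
    (hA : ContinuousOn A (Set.Icc 0 T)) (hY : ContinuousOn Y (Set.Icc 0 T))
    (h0n : ∀ n, a n 0 ≤ y n 0) (h0 : A 0 ≤ Y 0)
    (hconva : TendstoUniformlyOn (fun n => a n) A atTop (Set.Icc 0 T))
    (hconvy : TendstoUniformlyOn (fun n => y n) Y atTop (Set.Icc 0 T))
    (L : ℕ → StieltjesFunction ℝ) (L' : StieltjesFunction ℝ)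
    (hLn : ∀ n t, L n t = sSup ((fun s => max (a n s - y n s) 0) '' Set.Icc 0 (min t T)))
    (hL : ∀ t, L' t = sSup ((fun s => max (A s - Y s) 0) '' Set.Icc 0 (min t T))) :
    Tendsto
      (fun n => ∫ t in Set.Icc (0:ℝ) T,
        c t (y n t + sSup ((fun s => max (a n s - y n s) 0) '' Set.Icc 0 t))
          ∂(L n).measure)
      atTop
      (𝓝 (∫ t in Set.Icc (0:ℝ) T,
        c t (Y t + sSup ((fun s => max (A s - Y s) 0) '' Set.Icc 0 t))
          ∂L'.measure)) := by
  set r : ℕ → ℝ → ℝ := fun n s => max (a n s - y n s) 0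
  set R : ℝ → ℝ := fun s => max (A s - Y s) 0
  have hr : ∀ n, ContinuousOn (r n) (Icc 0 T) := fun n =>
    ContinuousOn.sup ((ha n).sub (hy n)) continuousOn_const
  have hR : ContinuousOn R (Icc 0 T) := ContinuousOn.sup (hA.sub hY) continuousOn_const
  have hrR : TendstoUniformlyOn r R atTop (Icc 0 T) :=
    (LipschitzWith.id.max_const 0).uniformContinuous.comp_tendstoUniformlyOn (hconva.sub hconvy)
  have hsup := hrR.sSup_image_Icc hr hR
  have hx : ∀ n, ContinuousOn (fun t => y n t + sSup (r n '' Icc 0 t)) (Icc 0 T) :=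
    fun n => (hy n).add (hr n).sSup_image_Icc
  have hX : ContinuousOn (fun t => Y t + sSup (R '' Icc 0 t)) (Icc 0 T) :=
    hY.add hR.sSup_image_Icc
  have hcost : ∀ {u : ℝ → ℝ}, ContinuousOn u (Icc 0 T) →
      ContinuousOn (fun t => c t (u t)) (Icc 0 T) :=
    fun hu => hc.comp (continuousOn_id.prodMk hu) fun t ht => ⟨ht, mem_univ _⟩
  have hLt : ∀ t ∈ Icc 0 T, Tendsto (fun n => L n t) atTop (𝓝 (L' t)) := fun t ht => by
    simp only [hLn, hL, min_eq_left ht.2]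
    exact hsup.tendsto_at ht
  have hnull : ∀ (S : StieltjesFunction ℝ) (g : ℝ → ℝ), g 0 ≤ 0 →
      (∀ t, S t = sSup ((fun s => max (g s) 0) '' Icc 0 (min t T))) → S.measure {0} = 0 :=
    fun S g hg hS => S.measure_singleton_eq_zero_of_eq neg_one_lt_zero <| by
      rw [hS, hS, min_eq_left (by linarith), min_eq_left hT.le, Icc_eq_empty (by norm_num),
        Icc_self, image_empty, image_singleton, Real.sSup_empty, csSup_singleton, max_eq_right hg]
  rw [integral_Icc_eq_integral_Ioc' (hnull L' (fun s => A s - Y s) (sub_nonpos.2 h0) hL)]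
  refine (tendsto_setIntegral_Ioc_stieltjes_of_tendstoUniformlyOn hT.le hLt
    (fun n => hcost (hx n)) (hcost hX)
    (hc.tendstoUniformlyOn_comp isCompact_Icc hX (hconvy.add hsup))).congr fun n => ?_
  exact (integral_Icc_eq_integral_Ioc'
    (hnull (L n) (fun s => a n s - y n s) (sub_nonpos.2 (h0n n)) (hLn n))).symm
end
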